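/- arXiv:2005.01867 — 7 statements merged into one kernel-verified Lean document; each statement's English description precedes it below -/
import Mathlib

section
/- For every pair A₀, A₁ of deterministic online algorithms for RemKnap and every real number ρ < (1 + √17)/4, there exists an instance l such that OPT(l) > ρ · max(gain(A₀, l), gain(A₁, l)). That is, no online algorithm for the proportional removable knapsack problem reading only a single advice bit has a strict competitive ratio better than (1 + √17)/4. -/
/-- An instance of RemKnap: a list of item sizes, each in (0,1]. -/
def ValidInstance (l : List ℝ) : Prop := ∀ s ∈ l, 0 < s ∧ s ≤ 1

/-- A deterministic online algorithm for the removable knapsack problem: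
it assigns to each instance a packing (set of 0-based item indices) that
respects the capacity, and on arrival of a new item it may only remove
previously packed items and add the new item. -/
structure OnlineAlg where
  pack : List ℝ → Finset ℕ
  pack_subset : ∀ l : List ℝ, ValidInstance l → pack l ⊆ Finset.range l.length
  pack_capacity : ∀ l : List ℝ, ValidInstance l → (∑ i ∈ pack l, l.getD i 0) ≤ 1
  pack_online : ∀ (l : List ℝ) (x : ℝ), ValidInstance (l ++ [x]) →
    pack (l ++ [x]) ⊆ pack l ∪ {l.length}

/-- The gain of an online algorithm on an instance: the total size of its final packing. -/
noncomputable def gain (A : OnlineAlg) (l : List ℝ) : ℝ := ∑ i ∈ A.pack l, l.getD i 0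

/-- The optimal (offline) value of an instance: the largest total size of a
subset of the items that does not exceed the capacity 1. -/
noncomputable def OPT (l : List ℝ) : ℝ :=
  ((Finset.range l.length).powerset.filter fun P => (∑ i ∈ P, l.getD i 0) ≤ 1).sup'
    ⟨∅, by simp⟩ (fun P => ∑ i ∈ P, l.getD i 0)

lemma rk_sum_singleton {f : ℕ → ℝ} {s : Finset ℕ} {i : ℕ} (h : s ⊆ {i}) :
    (∑ k ∈ s, f k) = 0 ∨ (∑ k ∈ s, f k) = f i := by
  rcases Finset.subset_singleton_iff.1 h with rfl | rfl
  · exact Or.inl (by simp)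
  · exact Or.inr (by simp)

lemma rk_sum_pair {f : ℕ → ℝ} {s : Finset ℕ} {i j : ℕ} (hij : i ≠ j) (h : s ⊆ {i, j}) :
    (∑ k ∈ s, f k) = 0 ∨ (∑ k ∈ s, f k) = f i ∨ (∑ k ∈ s, f k) = f j ∨
      (∑ k ∈ s, f k) = f i + f j := by
  by_cases hi : i ∈ s <;> by_cases hj : j ∈ s
  · have hs : s = {i, j} := subset_antisymm h (by
      intro x hx
      rcases Finset.mem_insert.1 hx with rfl | hx
      · exact hi
      · rw [Finset.mem_singleton] at hx; subst hx; exact hj)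
    exact Or.inr (Or.inr (Or.inr (by rw [hs, Finset.sum_pair hij])))
  · have hs : s = {i} := subset_antisymm (by
      intro x hx
      rcases Finset.mem_insert.1 (h hx) with rfl | h'
      · exact Finset.mem_singleton_self _
      · rw [Finset.mem_singleton] at h'; subst h'; exact absurd hx hj)
      (Finset.singleton_subset_iff.2 hi)
    exact Or.inr (Or.inl (by rw [hs, Finset.sum_singleton]))
  · have hs : s = {j} := subset_antisymm (by
      intro x hx
      rcases Finset.mem_insert.1 (h hx) with rfl | h'
      · exact absurd hx hi
      · rw [Finset.mem_singleton] at h'; subst h'; exact Finset.mem_singleton_self _)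
      (Finset.singleton_subset_iff.2 hj)
    exact Or.inr (Or.inr (Or.inl (by rw [hs, Finset.sum_singleton])))
  · have hs : s = ∅ := Finset.eq_empty_iff_forall_notMem.2 (by
      intro x hx
      rcases Finset.mem_insert.1 (h hx) with rfl | h'
      · exact hi hx
      · rw [Finset.mem_singleton] at h'; subst h'; exact hj hx)
    exact Or.inl (by rw [hs]; simp)

lemma rk_opt_ge (l : List ℝ) (P : Finset ℕ) (hP : P ⊆ Finset.range l.length)
    (hcap : (∑ i ∈ P, l.getD i 0) ≤ 1) : (∑ i ∈ P, l.getD i 0) ≤ OPT l := by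
  unfold OPT
  exact Finset.le_sup' (fun P => ∑ i ∈ P, l.getD i 0) (Finset.mem_filter.2 ⟨Finset.mem_powerset.2 hP, hcap⟩)

lemma rk_gain_singleton (A : OnlineAlg) (l : List ℝ) {i : ℕ}
    (hsub : A.pack l ⊆ {i}) {ρ C : ℝ}
    (h0 : 0 < C) (hi : ρ * l.getD i 0 < C) :
    ρ * gain A l < C := by
  rcases rk_sum_singleton hsub with h | h <;> unfold gain <;> rw [h]
  · simpa using h0
  · exact hi

/-- pair version where the pair together exceeds capacity -/
lemma rk_gain_pair (A : OnlineAlg) (l : List ℝ) {i j : ℕ} (hij : i ≠ j)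
    (hsub : A.pack l ⊆ {i, j}) (hV : ValidInstance l) {ρ C : ℝ}
    (h0 : 0 < C) (hi : ρ * l.getD i 0 < C) (hj : ρ * l.getD j 0 < C)
    (hinfeas : 1 < l.getD i 0 + l.getD j 0) :
    ρ * gain A l < C := by
  have hcap := A.pack_capacity l hV
  rcases rk_sum_pair hij hsub with h | h | h | h <;> unfold gain <;> rw [h]
  · simpa using h0
  · exact hi
  · exact hj
  · rw [h] at hcap; linarith

/-- pair version where the pair is feasible -/
lemma rk_gain_pair' (A : OnlineAlg) (l : List ℝ) {i j : ℕ} (hij : i ≠ j)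
    (hsub : A.pack l ⊆ {i, j}) {ρ C : ℝ}
    (h0 : 0 < C) (hi : ρ * l.getD i 0 < C) (hj : ρ * l.getD j 0 < C)
    (hij2 : ρ * (l.getD i 0 + l.getD j 0) < C) :
    ρ * gain A l < C := by
  rcases rk_sum_pair hij hsub with h | h | h | h <;> unfold gain <;> rw [h]
  · simpa using h0
  · exact hi
  · exact hj
  · exact hij2

lemma rk_finish {rho gA gB C O : ℝ} (hA : rho * gA < C)
    (hB : rho * gB < C) (hO : C ≤ O) : rho * max gA gB < O := by
  rcases max_cases gA gB with ⟨h, _⟩ | ⟨h, _⟩ <;> rw [h] <;> linarith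

lemma rk_pack2 (A : OnlineAlg) {a b : ℝ} (hV : ValidInstance [a, b]) (hab : 1 < a + b)
    (h1 : 1 ∈ A.pack [a, b]) : A.pack [a, b] = {1} := by
  have hsub := A.pack_subset [a, b] hV
  have hcap := A.pack_capacity [a, b] hV
  have h0 : 0 ∉ A.pack [a, b] := by
    intro h0
    have hpair : ({0, 1} : Finset ℕ) ⊆ A.pack [a, b] := by
      intro y hy; simp only [Finset.mem_insert, Finset.mem_singleton] at hy
      rcases hy with rfl | rfl <;> assumption
    have heq : A.pack [a, b] = {0, 1} := subset_antisymm (by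
      intro x hx; have hx2 := hsub hx
      simp only [List.length_cons, List.length_nil, Finset.mem_range] at hx2
      simp only [Finset.mem_insert, Finset.mem_singleton]; omega) hpair
    rw [heq, Finset.sum_pair (by norm_num)] at hcap
    have he : [a, b].getD 0 0 + [a, b].getD 1 0 = a + b := rfl
    rw [he] at hcap; linarith
  apply subset_antisymm
  · intro x hx
    have hx2 := hsub hx
    simp only [List.length_cons, List.length_nil, Finset.mem_range] at hx2
    simp only [Finset.mem_singleton]
    have : x ≠ 0 := by rintro rfl; exact h0 hx
    omega
  · simpa using h1

lemma rk_split (rho a b M : ℝ) (A B : OnlineAlg)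
    (hρ1 : 1 ≤ rho)
    (F1 : 0 < a) (F2 : a < b) (F3 : b < 1) (F4 : 1 < a + b)
    (F6 : rho * b < 1) (F7 : rho * b < M) (F8 : rho * M < 1)
    (F11 : rho * (a + (1 - b)) < 1) (F12 : rho * (1 - a) < 1)
    (hA : A.pack [a, b] = {1}) (hB : 1 ∉ B.pack [a, b]) :
    ∃ l, ValidInstance l ∧ rho * max (gain A l) (gain B l) < OPT l := by
  have hρ0 : (0 : ℝ) < rho := by linarith
  have hb0 : 0 < b := F1.trans F2
  have hM0 : 0 < M := lt_trans (mul_pos hρ0 hb0) F7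
  have F9 : b < M := by nlinarith
  have F14 : M < 1 := by nlinarith
  have F10 : 1 < a + M := by linarith
  have FbM : 1 < b + M := by linarith
  have Fa1 : a < 1 := F2.trans F3
  have Fra : rho * a < 1 := by nlinarith
  have FraM : rho * a < M := by nlinarith
  have F13 : rho * (1 - b) < 1 := by nlinarith
  have hV2 : ValidInstance [a, b] := by
    intro s hs; simp only [List.mem_cons, List.mem_singleton, List.not_mem_nil, or_false] at hs
    rcases hs with rfl | rfl <;> constructor <;> linarith
  have hV3 : ValidInstance [a, b, M] := by
    intro s hs; simp only [List.mem_cons, List.mem_singleton, List.not_mem_nil, or_false] at hs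
    rcases hs with rfl | rfl | rfl <;> constructor <;> linarith
  have hV4a : ValidInstance [a, b, M, 1 - a] := by
    intro s hs; simp only [List.mem_cons, List.mem_singleton, List.not_mem_nil, or_false] at hs
    rcases hs with rfl | rfl | rfl | rfl <;> constructor <;> linarith
  have hV4b : ValidInstance [a, b, M, 1 - b] := by
    intro s hs; simp only [List.mem_cons, List.mem_singleton, List.not_mem_nil, or_false] at hs
    rcases hs with rfl | rfl | rfl | rfl <;> constructor <;> linarith
  have hBsub : B.pack [a, b] ⊆ ({0} : Finset ℕ) := by
    intro x hx
    have hr := B.pack_subset [a, b] hV2 hx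
    simp only [List.length_cons, List.length_nil, Finset.mem_range] at hr
    simp only [Finset.mem_singleton]
    have : x ≠ 1 := by rintro rfl; exact hB hx
    omega
  have honl3A : A.pack [a, b, M] ⊆ ({1, 2} : Finset ℕ) := by
    intro x hx
    have h := A.pack_online [a, b] M hV3 hx
    rcases Finset.mem_union.1 h with h | h
    · rw [hA, Finset.mem_singleton] at h
      simp only [Finset.mem_insert, Finset.mem_singleton]; tauto
    · simp only [Finset.mem_singleton] at h
      simp only [Finset.mem_insert, Finset.mem_singleton]
      right; simpa using h
  have honl3B : B.pack [a, b, M] ⊆ ({0, 2} : Finset ℕ) := by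
    intro x hx
    have h := B.pack_online [a, b] M hV3 hx
    rcases Finset.mem_union.1 h with h | h
    · have := hBsub h
      simp only [Finset.mem_singleton] at this
      simp only [Finset.mem_insert, Finset.mem_singleton]; tauto
    · simp only [Finset.mem_singleton] at h
      simp only [Finset.mem_insert, Finset.mem_singleton]
      right; simpa using h
  by_cases hB2 : 2 ∈ B.pack [a, b, M]
  · -- B has swapped to M: final item 1 - a
    have hBeq : B.pack [a, b, M] ⊆ ({2} : Finset ℕ) := by
      intro x hx
      have h2 := honl3B hx
      simp only [Finset.mem_insert, Finset.mem_singleton] at h2 ⊢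
      rcases h2 with rfl | rfl
      · exfalso
        have hcap := B.pack_capacity [a, b, M] hV3
        have hpair : ({0, 2} : Finset ℕ) ⊆ B.pack [a, b, M] := by
          intro y hy; simp only [Finset.mem_insert, Finset.mem_singleton] at hy
          rcases hy with rfl | rfl <;> assumption
        have heq : B.pack [a, b, M] = {0, 2} := subset_antisymm honl3B hpair
        rw [heq, Finset.sum_pair (by norm_num)] at hcap
        have he : [a, b, M].getD 0 0 + [a, b, M].getD 2 0 = a + M := rfl
        rw [he] at hcap; linarith
      · rfl
    refine ⟨[a, b, M, 1 - a], hV4a, ?_⟩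
    have hBp4 : B.pack [a, b, M, 1 - a] ⊆ ({2, 3} : Finset ℕ) := by
      intro x hx
      have h := B.pack_online [a, b, M] (1 - a) hV4a hx
      rcases Finset.mem_union.1 h with h | h
      · have := hBeq h
        simp only [Finset.mem_singleton] at this
        simp only [Finset.mem_insert, Finset.mem_singleton]; tauto
      · simp only [Finset.mem_singleton] at h
        simp only [Finset.mem_insert, Finset.mem_singleton]
        right; simpa using h
    have hgB : rho * gain B [a, b, M, 1 - a] < 1 :=
      rk_gain_pair B [a, b, M, 1 - a] (by norm_num) hBp4 hV4a one_pos F8 F12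
        (by show (1:ℝ) < M + (1 - a); linarith)
    have hgA : rho * gain A [a, b, M, 1 - a] < 1 := by
      by_cases hA2 : 2 ∈ A.pack [a, b, M]
      · have hAeq : A.pack [a, b, M] ⊆ ({2} : Finset ℕ) := by
          intro x hx
          have h2 := honl3A hx
          simp only [Finset.mem_insert, Finset.mem_singleton] at h2 ⊢
          rcases h2 with rfl | rfl
          · exfalso
            have hcap := A.pack_capacity [a, b, M] hV3
            have hpair : ({1, 2} : Finset ℕ) ⊆ A.pack [a, b, M] := by
              intro y hy; simp only [Finset.mem_insert, Finset.mem_singleton] at hy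
              rcases hy with rfl | rfl <;> assumption
            have heq : A.pack [a, b, M] = {1, 2} := subset_antisymm honl3A hpair
            rw [heq, Finset.sum_pair (by norm_num)] at hcap
            have he : [a, b, M].getD 1 0 + [a, b, M].getD 2 0 = b + M := rfl
            rw [he] at hcap; linarith
          · rfl
        have hAp4 : A.pack [a, b, M, 1 - a] ⊆ ({2, 3} : Finset ℕ) := by
          intro x hx
          have h := A.pack_online [a, b, M] (1 - a) hV4a hx
          rcases Finset.mem_union.1 h with h | h
          · have := hAeq h
            simp only [Finset.mem_singleton] at this
            simp only [Finset.mem_insert, Finset.mem_singleton]; tauto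
          · simp only [Finset.mem_singleton] at h
            simp only [Finset.mem_insert, Finset.mem_singleton]
            right; simpa using h
        exact rk_gain_pair A [a, b, M, 1 - a] (by norm_num) hAp4 hV4a one_pos F8 F12
          (by show (1:ℝ) < M + (1 - a); linarith)
      · have hAeq : A.pack [a, b, M] ⊆ ({1} : Finset ℕ) := by
          intro x hx
          have h2 := honl3A hx
          simp only [Finset.mem_insert, Finset.mem_singleton] at h2 ⊢
          rcases h2 with rfl | rfl
          · rfl
          · exact absurd hx hA2
        have hAp4 : A.pack [a, b, M, 1 - a] ⊆ ({1, 3} : Finset ℕ) := by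
          intro x hx
          have h := A.pack_online [a, b, M] (1 - a) hV4a hx
          rcases Finset.mem_union.1 h with h | h
          · have := hAeq h
            simp only [Finset.mem_singleton] at this
            simp only [Finset.mem_insert, Finset.mem_singleton]; tauto
          · simp only [Finset.mem_singleton] at h
            simp only [Finset.mem_insert, Finset.mem_singleton]
            right; simpa using h
        exact rk_gain_pair A [a, b, M, 1 - a] (by norm_num) hAp4 hV4a one_pos F6 F12
          (by show (1:ℝ) < b + (1 - a); linarith)
    have hopt : (1 : ℝ) ≤ OPT [a, b, M, 1 - a] := by
      have hsum : (∑ i ∈ ({0, 3} : Finset ℕ), [a, b, M, 1 - a].getD i 0) = 1 := by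
        rw [Finset.sum_pair (by norm_num)]
        show a + (1 - a) = 1; ring
      have h := rk_opt_ge [a, b, M, 1 - a] {0, 3} (by intro x hx; simp only [Finset.mem_insert, Finset.mem_singleton] at hx; simp only [List.length_cons, List.length_nil, Finset.mem_range]; omega) (le_of_eq hsum)
      rw [hsum] at h; exact h
    exact rk_finish hgA hgB hopt
  · by_cases hA2 : 2 ∈ A.pack [a, b, M]
    · -- A has swapped to M, B still holds at most a: final item 1 - b
      have hAeq : A.pack [a, b, M] ⊆ ({2} : Finset ℕ) := by
        intro x hx
        have h2 := honl3A hx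
        simp only [Finset.mem_insert, Finset.mem_singleton] at h2 ⊢
        rcases h2 with rfl | rfl
        · exfalso
          have hcap := A.pack_capacity [a, b, M] hV3
          have hpair : ({1, 2} : Finset ℕ) ⊆ A.pack [a, b, M] := by
            intro y hy; simp only [Finset.mem_insert, Finset.mem_singleton] at hy
            rcases hy with rfl | rfl <;> assumption
          have heq : A.pack [a, b, M] = {1, 2} := subset_antisymm honl3A hpair
          rw [heq, Finset.sum_pair (by norm_num)] at hcap
          have he : [a, b, M].getD 1 0 + [a, b, M].getD 2 0 = b + M := rfl
          rw [he] at hcap; linarith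
        · rfl
      have hBeq : B.pack [a, b, M] ⊆ ({0} : Finset ℕ) := by
        intro x hx
        have h2 := honl3B hx
        simp only [Finset.mem_insert, Finset.mem_singleton] at h2 ⊢
        rcases h2 with rfl | rfl
        · rfl
        · exact absurd hx hB2
      refine ⟨[a, b, M, 1 - b], hV4b, ?_⟩
      have hAp4 : A.pack [a, b, M, 1 - b] ⊆ ({2, 3} : Finset ℕ) := by
        intro x hx
        have h := A.pack_online [a, b, M] (1 - b) hV4b hx
        rcases Finset.mem_union.1 h with h | h
        · have := hAeq h
          simp only [Finset.mem_singleton] at this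
          simp only [Finset.mem_insert, Finset.mem_singleton]; tauto
        · simp only [Finset.mem_singleton] at h
          simp only [Finset.mem_insert, Finset.mem_singleton]
          right; simpa using h
      have hBp4 : B.pack [a, b, M, 1 - b] ⊆ ({0, 3} : Finset ℕ) := by
        intro x hx
        have h := B.pack_online [a, b, M] (1 - b) hV4b hx
        rcases Finset.mem_union.1 h with h | h
        · have := hBeq h
          simp only [Finset.mem_singleton] at this
          simp only [Finset.mem_insert, Finset.mem_singleton]; tauto
        · simp only [Finset.mem_singleton] at h
          simp only [Finset.mem_insert, Finset.mem_singleton]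
          right; simpa using h
      have hgA : rho * gain A [a, b, M, 1 - b] < 1 :=
        rk_gain_pair A [a, b, M, 1 - b] (by norm_num) hAp4 hV4b one_pos F8 F13
          (by show (1:ℝ) < M + (1 - b); linarith)
      have hgB : rho * gain B [a, b, M, 1 - b] < 1 :=
        rk_gain_pair' B [a, b, M, 1 - b] (by norm_num) hBp4 one_pos Fra F13
          (by show rho * (a + (1 - b)) < 1; exact F11)
      have hopt : (1 : ℝ) ≤ OPT [a, b, M, 1 - b] := by
        have hsum : (∑ i ∈ ({1, 3} : Finset ℕ), [a, b, M, 1 - b].getD i 0) = 1 := by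
          rw [Finset.sum_pair (by norm_num)]
          show b + (1 - b) = 1; ring
        have h := rk_opt_ge [a, b, M, 1 - b] {1, 3} (by intro x hx; simp only [Finset.mem_insert, Finset.mem_singleton] at hx; simp only [List.length_cons, List.length_nil, Finset.mem_range]; omega) (le_of_eq hsum)
        rw [hsum] at h; exact h
      exact rk_finish hgA hgB hopt
    · -- neither took M: stop with [a, b, M]
      refine ⟨[a, b, M], hV3, ?_⟩
      have hAeq : A.pack [a, b, M] ⊆ ({1} : Finset ℕ) := by
        intro x hx
        have h2 := honl3A hx
        simp only [Finset.mem_insert, Finset.mem_singleton] at h2 ⊢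
        rcases h2 with rfl | rfl
        · rfl
        · exact absurd hx hA2
      have hBeq : B.pack [a, b, M] ⊆ ({0} : Finset ℕ) := by
        intro x hx
        have h2 := honl3B hx
        simp only [Finset.mem_insert, Finset.mem_singleton] at h2 ⊢
        rcases h2 with rfl | rfl
        · rfl
        · exact absurd hx hB2
      have hgA : rho * gain A [a, b, M] < M :=
        rk_gain_singleton A [a, b, M] hAeq hM0 F7
      have hgB : rho * gain B [a, b, M] < M :=
        rk_gain_singleton B [a, b, M] hBeq hM0 FraM
      have hopt : M ≤ OPT [a, b, M] := by
        have hsum : (∑ i ∈ ({2} : Finset ℕ), [a, b, M].getD i 0) = M := by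
          rw [Finset.sum_singleton]
          rfl
        have h := rk_opt_ge [a, b, M] {2} (by intro x hx; simp only [Finset.mem_singleton] at hx; simp only [List.length_cons, List.length_nil, Finset.mem_range]; omega) (by rw [hsum]; linarith)
        rw [hsum] at h; exact h
      exact rk_finish hgA hgB hopt


set_option maxHeartbeats 1000000 in
lemma rk_numbers (ρ : ℝ) (hρ1 : 1 ≤ ρ) (hq : 2 * ρ ^ 2 < ρ + 2) :
    ∃ a b M : ℝ, 0 < a ∧ a < b ∧ b < 1 ∧ 1 < a + b ∧ ρ * a < b ∧ ρ * b < 1 ∧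
      ρ * b < M ∧ ρ * M < 1 ∧ ρ * (a + (1 - b)) < 1 ∧ ρ * (1 - a) < 1 := by
  have hρ0 : (0 : ℝ) < ρ := by linarith
  have hq' : (0 : ℝ) < ρ + 2 - 2 * ρ ^ 2 := by linarith
  have hr : (0 : ℝ) ≤ ρ - 1 := by linarith
  set a : ℝ := (3 * ρ + 2 - 2 * ρ ^ 2) / (4 * ρ ^ 2) with ha
  set b : ℝ := (2 * ρ ^ 2 - ρ + 6) / (8 * ρ ^ 2) with hb
  set M : ℝ := (2 * ρ ^ 2 - ρ + 14) / (16 * ρ) with hM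
  have ha4 : 4 * ρ ^ 2 * a = 3 * ρ + 2 - 2 * ρ ^ 2 := by rw [ha]; field_simp
  have hb8 : 8 * ρ ^ 2 * b = 2 * ρ ^ 2 - ρ + 6 := by rw [hb]; field_simp
  have hM16 : 16 * ρ * M = 2 * ρ ^ 2 - ρ + 14 := by rw [hM]; field_simp
  have ha4r : 4 * ρ ^ 3 * a = 3 * ρ ^ 2 + 2 * ρ - 2 * ρ ^ 3 := by linear_combination ρ * ha4
  have hb8r : 8 * ρ ^ 3 * b = 2 * ρ ^ 3 - ρ ^ 2 + 6 * ρ := by linear_combination ρ * hb8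
  have hM16r : 16 * ρ ^ 2 * M = 2 * ρ ^ 3 - ρ ^ 2 + 14 * ρ := by linear_combination ρ * hM16
  have h4pos : (0 : ℝ) < 4 * ρ ^ 2 := by positivity
  have h8pos : (0 : ℝ) < 8 * ρ ^ 2 := by positivity
  have h16pos : (0 : ℝ) < 16 * ρ := by positivity
  have h8rpos : (0 : ℝ) < 8 * ρ := by positivity
  have h4rpos : (0 : ℝ) < 4 * ρ := by positivity
  have F1 : 0 < a := by rw [ha]; exact div_pos (by linarith) h4pos
  have F2 : a < b := by
    nlinarith [ha4, hb8, h8pos, mul_pos (show (0:ℝ) < 2*ρ-1 by linarith)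
      (show (0:ℝ) < 3*ρ-2 by linarith)]
  have F3 : b < 1 := by nlinarith [hb8, h8pos]
  have F4 : 1 < a + b := by nlinarith [ha4, hb8, h8pos, hq']
  have hP : (0:ℝ) < 4*ρ^3 - 4*ρ^2 - 5*ρ + 6 := by
    nlinarith [sq_nonneg (ρ - 17/16), mul_nonneg (mul_nonneg hr hr) hr]
  have F5 : ρ * a < b := by nlinarith [ha4r, hb8, h8pos, hP]
  have F6 : ρ * b < 1 := by nlinarith [hb8, h8rpos, hq', hr]
  have F7 : ρ * b < M := by nlinarith [hM16, hb8, h16pos, hq']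
  have F8 : ρ * M < 1 := by nlinarith [hM16r, h16pos, mul_pos hρ0 hq']
  have F11 : ρ * (a + (1 - b)) < 1 := by nlinarith [ha4r, hb8r, h8rpos, hq']
  have F12 : ρ * (1 - a) < 1 := by nlinarith [ha4r, h4rpos, hq', hr]
  exact ⟨a, b, M, F1, F2, F3, F4, F5, F6, F7, F8, F11, F12⟩

/-- No online algorithm for the proportional removable knapsack problem reading
only a single advice bit has a strict competitive ratio better than `(1 + √17)/4`. -/
theorem remKnap_one_advice_bit_lower_bound :
    ∀ A₀ A₁ : OnlineAlg, ∀ ρ : ℝ, ρ < (1 + Real.sqrt 17) / 4 →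
      ∃ l : List ℝ, ValidInstance l ∧ ρ * max (gain A₀ l) (gain A₁ l) < OPT l := by
  intro A₀ A₁ ρ hρ
  have hV1 : ValidInstance [(1 : ℝ)] := by
    intro s hs; simp only [List.mem_singleton] at hs; subst hs; norm_num
  rcases lt_or_ge ρ 1 with hρ1 | hρ1
  · -- trivial case ρ < 1
    refine ⟨[1], hV1, ?_⟩
    have hopt : (1 : ℝ) ≤ OPT [1] := by
      have hsum : (∑ i ∈ ({0} : Finset ℕ), [(1:ℝ)].getD i 0) = 1 := by
        rw [Finset.sum_singleton]
        rfl
      have h := rk_opt_ge [1] {0}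
        (by intro x hx; simp only [Finset.mem_singleton] at hx
            simp only [List.length_cons, List.length_nil, Finset.mem_range]; omega)
        (le_of_eq hsum)
      rw [hsum] at h; exact h
    have key : ∀ A : OnlineAlg, ρ * gain A [1] < 1 := by
      intro A
      have hsub : A.pack [1] ⊆ ({0} : Finset ℕ) := by
        intro x hx
        have := A.pack_subset [1] hV1 hx
        simp only [List.length_cons, List.length_nil, Finset.mem_range] at this
        simp only [Finset.mem_singleton]; omega
      rcases rk_sum_singleton (f := fun k => [(1:ℝ)].getD k 0) hsub with h | h <;>
        unfold gain <;> rw [h]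
      · rw [mul_zero]; norm_num
      · show ρ * (1 : ℝ) < 1; rw [mul_one]; exact hρ1
    rcases max_cases (gain A₀ [1]) (gain A₁ [1]) with ⟨h, _⟩ | ⟨h, _⟩ <;> rw [h] <;>
      [exact lt_of_lt_of_le (key A₀) hopt; exact lt_of_lt_of_le (key A₁) hopt]
  · -- main case 1 ≤ ρ
    have hρ0 : (0 : ℝ) < ρ := by linarith
    have hs17 : Real.sqrt 17 ^ 2 = 17 := Real.sq_sqrt (by norm_num)
    have hs17' : (0 : ℝ) ≤ Real.sqrt 17 := Real.sqrt_nonneg 17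
    have hgt : (1 - Real.sqrt 17) / 4 < ρ := by linarith
    have hq : 2 * ρ ^ 2 < ρ + 2 := by nlinarith [mul_pos (sub_pos.2 hρ) (sub_pos.2 hgt)]
    have hq' : (0 : ℝ) < ρ + 2 - 2 * ρ ^ 2 := by linarith
    have hr : (0 : ℝ) ≤ ρ - 1 := by linarith
    obtain ⟨a, b, M, F1, F2, F3, F4, F5, F6, F7, F8, F11, F12⟩ :=
      rk_numbers ρ hρ1 hq
    have hb0 : 0 < b := F1.trans F2
    have hV2 : ValidInstance [a, b] := by
      intro s hs; simp only [List.mem_cons, List.mem_singleton, List.not_mem_nil,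
        or_false] at hs
      rcases hs with rfl | rfl <;> constructor <;> linarith
    have hV3 : ValidInstance [a, b, 1 - a] := by
      intro s hs; simp only [List.mem_cons, List.mem_singleton, List.not_mem_nil,
        or_false] at hs
      rcases hs with rfl | rfl | rfl <;> constructor <;> linarith
    by_cases k₀ : 1 ∈ A₀.pack [a, b] <;> by_cases k₁ : 1 ∈ A₁.pack [a, b]
    · -- both algorithms hold b : give the complement 1 - a
      have e₀ := rk_pack2 A₀ hV2 F4 k₀
      have e₁ := rk_pack2 A₁ hV2 F4 k₁
      refine ⟨[a, b, 1 - a], hV3, ?_⟩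
      have hp : ∀ A : OnlineAlg, A.pack [a, b] = {1} →
          A.pack [a, b, 1 - a] ⊆ ({1, 2} : Finset ℕ) := by
        intro A hA x hx
        have h := A.pack_online [a, b] (1 - a) hV3 hx
        rcases Finset.mem_union.1 h with h | h
        · rw [hA, Finset.mem_singleton] at h
          simp only [Finset.mem_insert, Finset.mem_singleton]; tauto
        · simp only [Finset.mem_singleton] at h
          simp only [Finset.mem_insert, Finset.mem_singleton]
          right; simpa using h
      have hg : ∀ A : OnlineAlg, A.pack [a, b] = {1} → ρ * gain A [a, b, 1 - a] < 1 := by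
        intro A hA
        exact rk_gain_pair A [a, b, 1 - a] (by norm_num) (hp A hA) hV3 one_pos F6 F12
          (by show (1:ℝ) < b + (1 - a); linarith)
      have hopt : (1 : ℝ) ≤ OPT [a, b, 1 - a] := by
        have hsum : (∑ i ∈ ({0, 2} : Finset ℕ), [a, b, 1 - a].getD i 0) = 1 := by
          rw [Finset.sum_pair (by norm_num)]
          show a + (1 - a) = 1; ring
        have h := rk_opt_ge [a, b, 1 - a] {0, 2}
          (by intro x hx; simp only [Finset.mem_insert, Finset.mem_singleton] at hx
              simp only [List.length_cons, List.length_nil, Finset.mem_range]; omega)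
          (le_of_eq hsum)
        rw [hsum] at h; exact h
      exact rk_finish (hg A₀ e₀) (hg A₁ e₁) hopt
    · exact rk_split ρ a b M A₀ A₁ hρ1 F1 F2 F3 F4 F6 F7 F8 F11 F12
        (rk_pack2 A₀ hV2 F4 k₀) k₁
    · obtain ⟨l, hv, hlt⟩ := rk_split ρ a b M A₁ A₀ hρ1 F1 F2 F3 F4 F6 F7 F8 F11 F12
        (rk_pack2 A₁ hV2 F4 k₁) k₀
      exact ⟨l, hv, by rwa [max_comm]⟩
    · -- neither holds b : stop with [a, b]
      refine ⟨[a, b], hV2, ?_⟩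
      have hp : ∀ A : OnlineAlg, 1 ∉ A.pack [a, b] → A.pack [a, b] ⊆ ({0} : Finset ℕ) := by
        intro A hA x hx
        have := A.pack_subset [a, b] hV2 hx
        simp only [List.length_cons, List.length_nil, Finset.mem_range] at this
        simp only [Finset.mem_singleton]
        have : x ≠ 1 := by rintro rfl; exact hA hx
        omega
      have hg : ∀ A : OnlineAlg, 1 ∉ A.pack [a, b] → ρ * gain A [a, b] < b := by
        intro A hA
        exact rk_gain_singleton A [a, b] (hp A hA) hb0 F5
      have hopt : b ≤ OPT [a, b] := by
        have hsum : (∑ i ∈ ({1} : Finset ℕ), [a, b].getD i 0) = b := by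
          rw [Finset.sum_singleton]
          rfl
        have h := rk_opt_ge [a, b] {1}
          (by intro x hx; simp only [Finset.mem_singleton] at hx
              simp only [List.length_cons, List.length_nil, Finset.mem_range]; omega)
          (by rw [hsum]; linarith)
        rw [hsum] at h; exact h
      exact rk_finish (hg A₀ k₀) (hg A₁ k₁) hopt
end

section
/- Let k ≥ 2 be an integer. For every family A₁, …, A_k of k deterministic online algorithms for RemKnap and every real number ρ < 4 / (3 − 2k + √(4k(k+1) − 7)), there exists an instance l such that OPT(l) > ρ · max_{1≤j≤k} gain(A_j, l). That is, no online algorithm for the proportional removable knapsack problem reading at most log₂ k advice bits achieves a strict competitive ratio better than 4 / (3 − 2k + √(4k(k+1) − 7)). -/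
/-!
The adversary presents `k + 1` items `s₀ < s₁ < ⋯ < s_k`, any two of which overflow the knapsack,
so afterwards each of the `k` algorithms holds at most one item. If some light item `sᵢ` (`i < k`)
is held by nobody, the adversary appends `1 - sᵢ`: now `OPT = 1`, while an algorithm ends with a
single item, or with `1 - sᵢ + sₓ` for some `x < i`. Otherwise, by pigeonhole, the algorithms hold
exactly the `k` light items, nobody holds `s_k`, and the adversary stops. With `sᵢ = u + i d` for
`i < k` and `s_k = V`, all these gains stay below `OPT / ρ` as soon as
`2 (k - 1) ρ² < 2 + (2k - 3) ρ`, i.e. `ρ < 4 / (3 - 2k + √(4k(k+1) - 7))`.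
-/

open Finset

lemma sum_le_OPT {l : List ℝ} {P : Finset ℕ} (hP : P ⊆ range l.length)
    (hcap : ∑ i ∈ P, l.getD i 0 ≤ 1) : ∑ i ∈ P, l.getD i 0 ≤ OPT l :=
  le_sup' (fun P => ∑ i ∈ P, l.getD i 0) (mem_filter.2 ⟨mem_powerset.2 hP, hcap⟩)

lemma getD_pos {l : List ℝ} (hl : ValidInstance l) {i : ℕ} (hi : i < l.length) :
    0 < l.getD i 0 := by
  rw [List.getD_eq_getElem _ _ hi]
  exact (hl _ (List.getElem_mem hi)).1

lemma getD_le_OPT {l : List ℝ} (hl : ValidInstance l) {i : ℕ} (hi : i < l.length) :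
    l.getD i 0 ≤ OPT l := by
  have hle : l.getD i 0 ≤ 1 := by
    rw [List.getD_eq_getElem _ _ hi]
    exact (hl _ (List.getElem_mem hi)).2
  simpa using sum_le_OPT (P := {i}) (by simpa using hi) (by simpa using hle)

lemma gain_nonneg (A : OnlineAlg) {l : List ℝ} (hl : ValidInstance l) : 0 ≤ gain A l :=
  sum_nonneg fun _ hi => (getD_pos hl (mem_range.1 (A.pack_subset l hl hi))).le

lemma gain_le_one (A : OnlineAlg) {l : List ℝ} (hl : ValidInstance l) : gain A l ≤ 1 :=
  A.pack_capacity l hl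

lemma erase_pack_append_subset (A : OnlineAlg) {l : List ℝ} {x : ℝ}
    (hl : ValidInstance (l ++ [x])) : (A.pack (l ++ [x])).erase l.length ⊆ A.pack l :=
  fun _ hb => (mem_union.1 (A.pack_online l x hl (mem_of_mem_erase hb))).resolve_right
    fun h => ne_of_mem_erase hb (mem_singleton.1 h)

lemma card_pack_le_one (A : OnlineAlg) {l : List ℝ} (hl : ValidInstance l)
    (hconf : ∀ i j, i < j → j < l.length → 1 < l.getD i 0 + l.getD j 0) :
    #(A.pack l) ≤ 1 := by
  have hlt : ∀ c ∈ A.pack l, c < l.length := fun c hc => mem_range.1 (A.pack_subset l hl hc)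
  refine card_le_one.2 fun a ha b hb => by_contra fun hab => ?_
  have hpair : l.getD a 0 + l.getD b 0 ≤ gain A l := by
    rw [← sum_pair (f := fun i => l.getD i 0) hab]
    exact sum_le_sum_of_subset_of_nonneg (insert_subset ha (singleton_subset_iff.2 hb))
      fun i hi _ => (getD_pos hl (hlt i hi)).le
  have hcap := gain_le_one A hl
  rcases lt_or_gt_of_ne hab with h | h
  · linarith [hconf a b h (hlt b hb)]
  · linarith [hconf b a h (hlt a ha)]

lemma eq_singleton_of_card_le_one_of_covers {k : ℕ} (P : Fin k → Finset ℕ)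
    (hcard : ∀ j, #(P j) ≤ 1) (hcover : ∀ i : Fin k, ∃ j, (i : ℕ) ∈ P j) (j : Fin k) :
    ∃ i : Fin k, P j = {(i : ℕ)} := by
  choose F hF using hcover
  have hF_inj : F.Injective := fun a b hab =>
    Fin.ext (card_le_one.1 (hcard (F a)) _ (hF a) _ (hab ▸ hF b))
  obtain ⟨i, rfl⟩ := Finite.injective_iff_surjective.1 hF_inj j
  exact ⟨i, eq_singleton_iff_unique_mem.2
    ⟨hF i, fun b hb => card_le_one.1 (hcard (F i)) b hb i (hF i)⟩⟩

-- The `mul_*` fields say that `ρ` times each possible final gain stays below `OPT`: after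
-- `1 - sᵢ` is appended (`OPT = 1`) the gain is `1 - sᵢ + sₓ`, `1 - sᵢ` or `sₓ`, and
-- otherwise it is a light item, against `OPT ≥ s_k`.
structure IsHardSequence (k : ℕ) (ρ : ℝ) (s : ℕ → ℝ) : Prop where
  pos : ∀ i ≤ k, 0 < s i
  top_le_one : s k ≤ 1
  strictMonoOn : StrictMonoOn s (Set.Iic k)
  one_lt_add : ∀ i j, i < j → j ≤ k → 1 < s i + s j
  mul_one_sub_add_lt : ∀ x i, x < i → i < k → ρ * (1 - s i + s x) < 1
  mul_one_sub_lt : ∀ i < k, ρ * (1 - s i) < 1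
  mul_top_lt : ρ * s k < 1
  mul_lt_top : ∀ x < k, ρ * s x < s k

def hardInstance (k : ℕ) (s : ℕ → ℝ) : List ℝ := (List.range (k + 1)).map s

section hardInstance

variable {k : ℕ} {s : ℕ → ℝ}

@[simp]
lemma length_hardInstance : (hardInstance k s).length = k + 1 := by
  simp [hardInstance]

lemma getD_hardInstance {i : ℕ} (hi : i ≤ k) : (hardInstance k s).getD i 0 = s i := by
  simp [hardInstance, Nat.lt_succ_of_le hi]

lemma getD_hardInstance_append_of_le {c : ℝ} {i : ℕ} (hi : i ≤ k) :
    (hardInstance k s ++ [c]).getD i 0 = s i := by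
  rw [List.getD_append _ _ _ _ (by simp; omega), getD_hardInstance hi]

lemma getD_hardInstance_append_last {c : ℝ} :
    (hardInstance k s ++ [c]).getD (k + 1) 0 = c := by
  rw [List.getD_append_right _ _ _ _ (by simp)]
  simp

lemma one_le_OPT_hardInstance_append_one_sub {i : ℕ} (hi : i ≤ k) :
    1 ≤ OPT (hardInstance k s ++ [1 - s i]) := by
  have hsum : ∑ b ∈ {i, k + 1}, (hardInstance k s ++ [1 - s i]).getD b 0 = 1 := by
    rw [sum_pair (by omega), getD_hardInstance_append_of_le hi,
      getD_hardInstance_append_last]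
    ring
  calc 1 = _ := hsum.symm
    _ ≤ _ := sum_le_OPT (fun b hb => by simp at hb ⊢; omega) hsum.le

end hardInstance

namespace IsHardSequence

variable {k : ℕ} {ρ : ℝ} {s : ℕ → ℝ}

lemma le_one (h : IsHardSequence k ρ s) {i : ℕ} (hi : i ≤ k) : s i ≤ 1 := by
  rcases hi.lt_or_eq with hi | rfl
  · exact (h.strictMonoOn (Set.mem_Iic.2 hi.le) Set.self_mem_Iic hi).le.trans h.top_le_one
  · exact h.top_le_one

lemma mul_lt_one (h : IsHardSequence k ρ s) {i : ℕ} (hi : i ≤ k) : ρ * s i < 1 := by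
  rcases hi.lt_or_eq with hi | rfl
  · exact (h.mul_lt_top i hi).trans_le h.top_le_one
  · exact h.mul_top_lt

lemma validInstance (h : IsHardSequence k ρ s) : ValidInstance (hardInstance k s) := by
  intro x hx
  obtain ⟨i, hi, rfl⟩ := List.mem_map.1 hx
  have hi : i ≤ k := Nat.lt_succ_iff.1 (List.mem_range.1 hi)
  exact ⟨h.pos i hi, h.le_one hi⟩

lemma le_of_mem_pack (h : IsHardSequence k ρ s) (A : OnlineAlg) {b : ℕ}
    (hb : b ∈ A.pack (hardInstance k s)) : b ≤ k := by
  simpa [Nat.lt_succ_iff] using A.pack_subset _ h.validInstance hb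

lemma card_pack_le_one (h : IsHardSequence k ρ s) (A : OnlineAlg) :
    #(A.pack (hardInstance k s)) ≤ 1 :=
  _root_.card_pack_le_one A h.validInstance fun i j hij hj => by
    rw [length_hardInstance] at hj
    rw [getD_hardInstance (by omega), getD_hardInstance (by omega)]
    exact h.one_lt_add i j hij (by omega)

lemma validInstance_append_one_sub (h : IsHardSequence k ρ s) {i : ℕ} (hi : i < k) :
    ValidInstance (hardInstance k s ++ [1 - s i]) := by
  intro x hx
  rcases List.mem_append.1 hx with hx | hx
  · exact h.validInstance x hx
  · rw [List.mem_singleton.1 hx]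
    have hlt := h.strictMonoOn (Set.mem_Iic.2 hi.le) Set.self_mem_Iic hi
    constructor <;> linarith [h.top_le_one, h.pos i hi.le]

lemma mul_gain_append_one_sub_lt_one (h : IsHardSequence k ρ s) (A : OnlineAlg) {i : ℕ}
    (hi : i < k) (hA : i ∉ A.pack (hardInstance k s)) :
    ρ * gain A (hardInstance k s ++ [1 - s i]) < 1 := by
  set l' := hardInstance k s ++ [1 - s i]
  have hl' : ValidInstance l' := h.validInstance_append_one_sub hi
  have hold : (A.pack l').erase (k + 1) ⊆ A.pack (hardInstance k s) := by
    simpa using erase_pack_append_subset A hl'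
  obtain ⟨x, hx⟩ := card_le_one_iff_subset_singleton.1 (h.card_pack_le_one A)
  by_cases hnew : k + 1 ∈ A.pack l'
  · have hgain : gain A l' = 1 - s i + ∑ b ∈ (A.pack l').erase (k + 1), l'.getD b 0 := by
      rw [gain, ← add_sum_erase _ _ hnew, getD_hardInstance_append_last]
    rcases subset_singleton_iff.1 (hold.trans hx) with he | he
    · rw [hgain, he, sum_empty, add_zero]
      exact h.mul_one_sub_lt i hi
    · have hxl : x ∈ A.pack (hardInstance k s) := hold (he ▸ mem_singleton_self x)
      have hxk := h.le_of_mem_pack A hxl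
      rw [he, sum_singleton, getD_hardInstance_append_of_le hxk] at hgain
      -- `x ≠ i` since `i` was not held, and `i < x` would overflow the knapsack
      have hxi : x < i := by
        refine lt_of_le_of_ne (not_lt.1 fun hix => ?_) (ne_of_mem_of_not_mem hxl hA)
        linarith [gain_le_one A hl', h.strictMonoOn (Set.mem_Iic.2 (hix.le.trans hxk)) hxk hix]
      rw [hgain]
      exact h.mul_one_sub_add_lt x i hxi hi
  · have hsub : A.pack l' ⊆ A.pack (hardInstance k s) := fun b hb =>
      hold (mem_erase.2 ⟨ne_of_mem_of_not_mem hb hnew, hb⟩)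
    rcases subset_singleton_iff.1 (hsub.trans hx) with he | he
    · simp [gain, he]
    · have hxk := h.le_of_mem_pack A (hsub (he ▸ mem_singleton_self x))
      rw [gain, he, sum_singleton, getD_hardInstance_append_of_le hxk]
      exact h.mul_lt_one hxk

lemma exists_instance (h : IsHardSequence k ρ s) (A : Fin k → OnlineAlg) :
    ∃ l, ValidInstance l ∧ ∀ j, ρ * gain (A j) l < OPT l := by
  by_cases hcover : ∀ i : Fin k, ∃ j, (i : ℕ) ∈ (A j).pack (hardInstance k s)
  · refine ⟨hardInstance k s, h.validInstance, fun j => ?_⟩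
    obtain ⟨i, hi⟩ := eq_singleton_of_card_le_one_of_covers _
      (fun j => h.card_pack_le_one (A j)) hcover j
    calc ρ * gain (A j) (hardInstance k s) = ρ * s i := by
          rw [gain, hi, sum_singleton, getD_hardInstance i.is_lt.le]
      _ < s k := h.mul_lt_top i i.is_lt
      _ = (hardInstance k s).getD k 0 := (getD_hardInstance le_rfl).symm
      _ ≤ OPT (hardInstance k s) := getD_le_OPT h.validInstance (by simp)
  · push Not at hcover
    obtain ⟨i, hi⟩ := hcover
    exact ⟨_, h.validInstance_append_one_sub i.is_lt, fun j =>
      (h.mul_gain_append_one_sub_lt_one (A j) i.is_lt (hi j)).trans_le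
        (one_le_OPT_hardInstance_append_one_sub i.is_lt.le)⟩

end IsHardSequence

/-- The bound is the positive root of `2 (K - 1) ρ² - (2K - 3) ρ - 2`. -/
lemma lt_four_div_iff_quadratic {K ρ : ℝ} (hK : 1 < K) (hρ : 0 ≤ ρ) :
    ρ < 4 / (3 - 2 * K + √(4 * K * (K + 1) - 7)) ↔
      2 * (K - 1) * ρ ^ 2 < 2 + (2 * K - 3) * ρ := by
  set S := √(4 * K * (K + 1) - 7)
  have hS2 : S ^ 2 = 4 * K * (K + 1) - 7 := Real.sq_sqrt (by nlinarith)
  have hS : 0 ≤ S := Real.sqrt_nonneg _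
  have hD : 0 < 3 - 2 * K + S := by nlinarith
  rw [lt_div_iff₀ hD]
  constructor
  · intro h
    have hρS : ρ * S < 4 + (2 * K - 3) * ρ := by linarith
    have := mul_self_lt_mul_self (by positivity) hρS
    nlinarith
  · intro h
    have hR : 0 < 4 + (2 * K - 3) * ρ := by nlinarith
    have : (ρ * S) ^ 2 < (4 + (2 * K - 3) * ρ) ^ 2 := by rw [mul_pow, hS2]; nlinarith
    nlinarith [abs_lt_of_sq_lt_sq this hR.le]

-- For `δ = 0` the witnesses below turn `1 < 2 * u + d` and `ρ * (1 - d) < 1` into equalities,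
-- while `ρ² (u + (K - 1) d) < 1`, which is what `ρ * V < 1` needs, becomes exactly `hquad`.
lemma exists_progression_params {K ρ : ℝ} (hK : 2 ≤ K) (hρ : 1 ≤ ρ)
    (hquad : 2 * (K - 1) * ρ ^ 2 < 2 + (2 * K - 3) * ρ) :
    ∃ u d V : ℝ, 0 < u ∧ 0 < d ∧ 1 < 2 * u + d ∧ ρ * (1 - d) < 1 ∧ ρ * (1 - u) < 1 ∧
      ρ * V < 1 ∧ ρ * (u + (K - 1) * d) < V ∧ V ≤ 1 := by
  have hρ0 : 0 < ρ := by linarith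
  have hρ_lt : ρ < 3 / 2 := by
    nlinarith [mul_nonneg (sub_nonneg.2 hK) (mul_nonneg hρ0.le (sub_nonneg.2 hρ))]
  obtain ⟨c, hc, hc0, hc_le⟩ : ∃ c, ρ * c = 1 ∧ 0 < c ∧ c ≤ 1 :=
    ⟨ρ⁻¹, mul_inv_cancel₀ hρ0.ne', inv_pos.2 hρ0, inv_le_one_of_one_le₀ hρ⟩
  obtain ⟨δ, hδ, hδquad⟩ := exists_pos_mul_lt (sub_pos.2 hquad) (ρ ^ 2 * (2 * K - 1))
  have hρδ := mul_pos hρ0 hδ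
  have hL : ρ * ((c + δ) / 2 + (K - 1) * (1 - c + δ)) < c := by
    refine lt_of_mul_lt_mul_left ?_ hρ0.le
    linear_combination (1 / 2) * hδquad + (ρ * (3 / 2 - K) - 1) * hc
  refine ⟨(c + δ) / 2, 1 - c + δ, (ρ * ((c + δ) / 2 + (K - 1) * (1 - c + δ)) + c) / 2,
    by positivity, by linarith, by linarith, by linear_combination hc + hρδ, ?_, ?_,
    by linarith, by linarith⟩
  · linear_combination hρ_lt - (1 / 2) * hc + (1 / 2) * hρδ
  · linear_combination (1 / 2) * mul_lt_mul_of_pos_left hL hρ0 + hc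

def progression (k : ℕ) (u d V : ℝ) (i : ℕ) : ℝ := if i < k then u + i * d else V

section progression

variable {k : ℕ} {u d V : ℝ}

lemma progression_of_lt {i : ℕ} (hi : i < k) : progression k u d V i = u + i * d := if_pos hi

lemma progression_self : progression k u d V k = V := if_neg (lt_irrefl k)

lemma progression_le (hd : 0 ≤ d) {i : ℕ} (hi : i < k) :
    progression k u d V i ≤ u + (k - 1) * d := by
  have : (i : ℝ) + 1 ≤ k := by exact_mod_cast hi
  rw [progression_of_lt hi]
  nlinarith

lemma isHardSequence_progression (hk : 2 ≤ k) {ρ : ℝ} (hρ : 1 ≤ ρ) (hu : 0 < u)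
    (hd : 0 < d) (hconf : 1 < 2 * u + d) (hgap : ρ * (1 - d) < 1) (hcompl : ρ * (1 - u) < 1)
    (htop : ρ * V < 1) (hlast : ρ * (u + (k - 1) * d) < V) (hV : V ≤ 1) :
    IsHardSequence k ρ (progression k u d V) := by
  have hk' : (2 : ℝ) ≤ k := by exact_mod_cast hk
  have hL : 0 < u + (k - 1) * d := by nlinarith
  have hLV : u + (k - 1) * d < V := by linarith [mul_le_mul_of_nonneg_right hρ hL.le]
  have hlt_top : ∀ i < k, progression k u d V i < V := fun i hi =>
    (progression_le hd.le hi).trans_lt hLV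
  refine ⟨fun i hi => ?_, by rwa [progression_self], fun i _ j hj hij => ?_,
    fun i j hij hj => ?_, fun x i hxi hi => ?_, fun i hi => ?_, by rwa [progression_self],
    fun x hx => ?_⟩
  · rcases hi.lt_or_eq with hi | rfl
    · rw [progression_of_lt hi]
      positivity
    · rw [progression_self]
      linarith
  · rcases (show j ≤ k from hj).lt_or_eq with hj | rfl
    · have : (i : ℝ) < j := by exact_mod_cast hij
      rw [progression_of_lt (hij.trans hj), progression_of_lt hj]
      nlinarith
    · rw [progression_self]
      exact hlt_top i hij
  · have hj1 : (1 : ℝ) ≤ j := by exact_mod_cast hij.trans_le' (Nat.zero_le i)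
    have hsj : u + d ≤ progression k u d V j := by
      rcases hj.lt_or_eq with hj | rfl
      · rw [progression_of_lt hj]
        nlinarith
      · rw [progression_self]
        nlinarith
    rw [progression_of_lt (hij.trans_le hj)]
    nlinarith
  · have : (x : ℝ) + 1 ≤ i := by exact_mod_cast hxi
    rw [progression_of_lt hi, progression_of_lt (hxi.trans hi)]
    nlinarith
  · rw [progression_of_lt hi]
    nlinarith
  · rw [progression_self]
    exact (mul_le_mul_of_nonneg_left (progression_le hd.le hx) (by linarith)).trans_lt hlast

end progression

/-- No online algorithm for the proportional removable knapsack problem reading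
at most `log₂ k` advice bits (i.e. a family of `k` deterministic online algorithms)
achieves a strict competitive ratio better than `4 / (3 - 2k + √(4k(k+1) - 7))`. -/
theorem remKnap_log_k_advice_bits_lower_bound (k : ℕ) (hk : 2 ≤ k) :
    ∀ A : Fin k → OnlineAlg, ∀ ρ : ℝ,
      ρ < 4 / (3 - 2 * (k : ℝ) + Real.sqrt (4 * (k : ℝ) * ((k : ℝ) + 1) - 7)) →
      ∃ l : List ℝ, ValidInstance l ∧
        ρ * (Finset.univ.sup' ⟨⟨0, by omega⟩, Finset.mem_univ _⟩ fun j => gain (A j) l)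
          < OPT l := by
  intro A ρ hρ
  have hk' : (2 : ℝ) ≤ k := by exact_mod_cast hk
  set ρ' := max ρ 1
  have hquad : 2 * (k - 1) * ρ' ^ 2 < 2 + (2 * k - 3) * ρ' :=
    (lt_four_div_iff_quadratic (by linarith) (by positivity)).1 <| max_lt hρ <|
      (lt_four_div_iff_quadratic (by linarith) zero_le_one).2 (by linarith)
  obtain ⟨u, d, V, hu, hd, hconf, hgap, hcompl, htop, hlast, hV⟩ :=
    exists_progression_params hk' (le_max_right ρ 1) hquad
  obtain ⟨l, hl, hlt⟩ := (isHardSequence_progression hk (le_max_right ρ 1) hu hd hconf hgap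
    hcompl htop hlast hV).exists_instance A
  refine ⟨l, hl, ?_⟩
  obtain ⟨j, -, hj⟩ := exists_mem_eq_sup' ⟨⟨0, by omega⟩, mem_univ _⟩ fun j => gain (A j) l
  rw [hj]
  calc ρ * gain (A j) l ≤ ρ' * gain (A j) l :=
        mul_le_mul_of_nonneg_right (le_max_left ρ 1) (gain_nonneg (A j) hl)
    _ < OPT l := hlt j
end

section
/- There exist four deterministic online algorithms A₁, A₂, A₃, A₄ for RemKnap such that for every instance l one has OPT(l) ≤ (4/3) · max_{1≤j≤4} gain(A_j, l). That is, there is a strictly 4/3-competitive online algorithm for the proportional removable knapsack problem reading two advice bits. -/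
/-!
Call an item tiny (size at most `1/4`), medium (at most `1/2`) or large. All four algorithms
freeze their packing once it is filled to `3/4`, which is within `4/3` of `OPT ≤ 1`; suppose
none ever freezes. One algorithm keeps the two smallest medium items and packs an arriving item
that fits with them, another keeps the smallest large item and packs an arriving medium item
that fits with it. As neither froze, no medium item fits with a large one and no three medium
items fit together, so an optimal packing is made of tiny items and either one large item or
at most two medium ones. The other two algorithms keep all tiny items together with the largest
large item, resp. the two largest medium items, so one of them packs at least as much. (When
the tiny items overflow, just enough of them to reach `3/4` are kept, which is possible because
each is at most `1/4`.)
-/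

namespace RemKnap

open Finset
open scoped Classical

noncomputable section

def itemSize (l : List ℝ) (i : ℕ) : ℝ := l.getD i 0

def load (l : List ℝ) (P : Finset ℕ) : ℝ := ∑ i ∈ P, itemSize l i

abbrev IsTiny (x : ℝ) : Prop := x ≤ 1 / 4

abbrev IsMedium (x : ℝ) : Prop := 1 / 4 < x ∧ x ≤ 1 / 2

abbrev IsLarge (x : ℝ) : Prop := 1 / 2 < x

def classPart (p : ℝ → Prop) (l : List ℝ) (P : Finset ℕ) : Finset ℕ :=
  P.filter fun i => p (itemSize l i)

def indicesOf (p : ℝ → Prop) (l : List ℝ) : Finset ℕ := classPart p l (range l.length)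

theorem exists_subset_sum_mem_Icc {ι : Type*} [DecidableEq ι] (f : ι → ℝ) {δ θ : ℝ}
    (hθδ : 0 ≤ θ + δ) (S : Finset ι) (hf : ∀ i ∈ S, f i ≤ δ)
    (hS : θ ≤ ∑ i ∈ S, f i) :
    ∃ T ⊆ S, ∑ i ∈ T, f i ∈ Set.Icc θ (θ + δ) := by
  induction S using Finset.strongInduction with
  | H S ih =>
    by_cases hle : ∑ i ∈ S, f i ≤ θ + δ
    · exact ⟨S, subset_rfl, hS, hle⟩
    obtain rfl | ⟨a, ha⟩ := S.eq_empty_or_nonempty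
    · simp only [sum_empty] at hle
      linarith
    have hsplit := add_sum_erase S f ha
    obtain ⟨T, hT, hTsum⟩ := ih (S.erase a) (erase_ssubset ha)
      (fun i hi => hf i (mem_of_mem_erase hi)) (by linarith [hf a ha])
    exact ⟨T, hT.trans (erase_subset a S), hTsum⟩

theorem sum_le_add_of_card_eq_two {ι : Type*} [DecidableEq ι] {f : ι → ℝ} {S Q : Finset ι}
    (hcard : Q.card = 2) (hle : ∀ j ∈ S, j ∉ Q → ∀ i ∈ Q, f i ≤ f j)
    {i j : ι} (hi : i ∈ S) (hj : j ∈ S) (hij : i ≠ j) : ∑ k ∈ Q, f k ≤ f i + f j := by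
  obtain ⟨a, b, hab, rfl⟩ := card_eq_two.mp hcard
  rw [sum_pair hab]
  have ha : a ∈ ({a, b} : Finset ι) := by simp
  have hb : b ∈ ({a, b} : Finset ι) := by simp
  by_cases hiQ : i ∈ ({a, b} : Finset ι) <;> by_cases hjQ : j ∈ ({a, b} : Finset ι)
  · simp only [mem_insert, mem_singleton] at hiQ hjQ
    rcases hiQ with rfl | rfl <;> rcases hjQ with rfl | rfl <;>
      first | exact absurd rfl hij | linarith
  · have := hle j hj hjQ a ha
    have := hle j hj hjQ b hb
    simp only [mem_insert, mem_singleton] at hiQ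
    rcases hiQ with rfl | rfl <;> linarith
  · have := hle i hi hiQ a ha
    have := hle i hi hiQ b hb
    simp only [mem_insert, mem_singleton] at hjQ
    rcases hjQ with rfl | rfl <;> linarith
  · linarith [hle i hi hiQ a ha, hle j hj hjQ b hb]

theorem add_le_sum_of_card_eq_two {ι : Type*} [DecidableEq ι] {f : ι → ℝ} {S Q : Finset ι}
    (hcard : Q.card = 2) (hle : ∀ j ∈ S, j ∉ Q → ∀ i ∈ Q, f j ≤ f i)
    {i j : ι} (hi : i ∈ S) (hj : j ∈ S) (hij : i ≠ j) : f i + f j ≤ ∑ k ∈ Q, f k := by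
  have := sum_le_add_of_card_eq_two (f := fun k => -f k) hcard
    (fun j hj hjQ i hi => neg_le_neg (hle j hj hjQ i hi)) hi hj hij
  rw [sum_neg_distrib] at this
  linarith

section Items

variable {l : List ℝ} {P Q : Finset ℕ} {x : ℝ} {i : ℕ} {p : ℝ → Prop}

theorem ValidInstance.of_append (h : ValidInstance (l ++ [x])) :
    ValidInstance l ∧ 0 < x ∧ x ≤ 1 :=
  ⟨fun s hs => h s (List.mem_append_left _ hs), h x (by simp)⟩

theorem itemSize_nonneg (hl : ValidInstance l) (i : ℕ) : 0 ≤ itemSize l i := by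
  rw [itemSize, List.getD_eq_getElem?_getD]
  cases h : l[i]? with
  | none => simp
  | some s => exact (hl s (List.mem_of_getElem? h)).1.le

theorem itemSize_append_of_lt (h : i < l.length) : itemSize (l ++ [x]) i = itemSize l i :=
  List.getD_append _ _ _ _ h

@[simp]
theorem itemSize_append_length : itemSize (l ++ [x]) l.length = x := by
  simp [itemSize]

theorem itemSize_take {k : ℕ} (h : i < k) : itemSize (l.take k) i = itemSize l i := by
  simp [itemSize, List.getD_eq_getElem?_getD, h]

theorem load_nonneg (hl : ValidInstance l) (P : Finset ℕ) : 0 ≤ load l P :=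
  sum_nonneg fun i _ => itemSize_nonneg hl i

theorem load_mono (hl : ValidInstance l) (h : P ⊆ Q) : load l P ≤ load l Q :=
  sum_le_sum_of_subset_of_nonneg h fun i _ _ => itemSize_nonneg hl i

theorem load_union (hd : Disjoint P Q) : load l (P ∪ Q) = load l P + load l Q :=
  sum_union hd

theorem load_add_load_le (hl : ValidInstance l) {R : Finset ℕ} (hd : Disjoint P Q)
    (hP : P ⊆ R) (hQ : Q ⊆ R) : load l P + load l Q ≤ load l R := by
  rw [← load_union hd]
  exact load_mono hl (union_subset hP hQ)

theorem load_insert (h : i ∉ P) : load l (insert i P) = itemSize l i + load l P :=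
  sum_insert h

theorem load_erase_add (h : i ∈ P) : load l (P.erase i) + itemSize l i = load l P :=
  sum_erase_add P _ h

theorem load_singleton (i : ℕ) : load l {i} = itemSize l i := sum_singleton _ _

theorem load_pair {j : ℕ} (h : i ≠ j) : load l {i, j} = itemSize l i + itemSize l j :=
  sum_pair h

theorem length_notMem (hP : P ⊆ range l.length) : l.length ∉ P :=
  fun h => by simpa using hP h

theorem itemSize_append_of_mem (hP : P ⊆ range l.length) (hi : i ∈ P) :
    itemSize (l ++ [x]) i = itemSize l i :=
  itemSize_append_of_lt (mem_range.mp (hP hi))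

theorem load_append (hP : P ⊆ range l.length) : load (l ++ [x]) P = load l P :=
  sum_congr rfl fun _ hi => itemSize_append_of_mem hP hi

theorem load_append_insert (hP : P ⊆ range l.length) :
    load (l ++ [x]) (insert l.length P) = load l P + x := by
  rw [load_insert (length_notMem hP), load_append hP, itemSize_append_length, add_comm]

theorem mem_classPart : i ∈ classPart p l P ↔ i ∈ P ∧ p (itemSize l i) := mem_filter

theorem classPart_subset : classPart p l P ⊆ P := filter_subset _ _

theorem classPart_append (hP : P ⊆ range l.length) :
    classPart p (l ++ [x]) P = classPart p l P :=
  filter_congr fun _ hi => by rw [itemSize_append_of_mem hP hi]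

theorem mem_indicesOf : i ∈ indicesOf p l ↔ i < l.length ∧ p (itemSize l i) := by
  rw [indicesOf, mem_classPart, mem_range]

theorem indicesOf_subset_range : indicesOf p l ⊆ range l.length := classPart_subset

theorem indicesOf_append_of_pos (hx : p x) :
    indicesOf p (l ++ [x]) = insert l.length (indicesOf p l) := by
  ext i
  simp only [mem_indicesOf, mem_insert, List.length_append, List.length_singleton]
  constructor
  · rintro ⟨hi, hpi⟩
    rcases (Nat.lt_succ_iff.mp hi).lt_or_eq with hi | rfl
    · exact Or.inr ⟨hi, by rwa [itemSize_append_of_lt hi] at hpi⟩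
    · exact Or.inl rfl
  · rintro (rfl | ⟨hi, hpi⟩)
    · exact ⟨by omega, by rwa [itemSize_append_length]⟩
    · exact ⟨by omega, by rwa [itemSize_append_of_lt hi]⟩

theorem indicesOf_append_of_neg (hx : ¬ p x) : indicesOf p (l ++ [x]) = indicesOf p l := by
  ext i
  simp only [mem_indicesOf, List.length_append, List.length_singleton]
  constructor
  · rintro ⟨hi, hpi⟩
    rcases (Nat.lt_succ_iff.mp hi).lt_or_eq with hi | rfl
    · exact ⟨hi, by rwa [itemSize_append_of_lt hi] at hpi⟩
    · exact absurd (by rwa [itemSize_append_length] at hpi) hx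
  · rintro ⟨hi, hpi⟩
    exact ⟨by omega, by rwa [itemSize_append_of_lt hi]⟩

theorem classPart_subset_indicesOf (hP : P ⊆ range l.length) :
    classPart p l P ⊆ indicesOf p l := fun _ hi =>
  mem_indicesOf.mpr ⟨mem_range.mp (hP (mem_classPart.mp hi).1), (mem_classPart.mp hi).2⟩

theorem load_classPart_add_load_classPart_not :
    load l (classPart p l P) + load l (classPart (fun s => ¬ p s) l P) = load l P := by
  unfold load classPart
  convert sum_filter_add_sum_filter_not P (fun i => p (itemSize l i)) (itemSize l)

theorem mem_indicesOf_take {k : ℕ} (hik : i < k) (hi : i ∈ indicesOf p l) :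
    i ∈ indicesOf p (l.take k) := by
  rw [mem_indicesOf] at hi ⊢
  exact ⟨by simp [hik, hi.1], by rw [itemSize_take hik]; exact hi.2⟩

theorem card_div_four_lt_load (hne : P.Nonempty)
    (h : ∀ i ∈ P, 1 / 4 < itemSize l i) : (P.card : ℝ) / 4 < load l P := by
  have := sum_lt_sum_of_nonempty hne h
  rw [sum_const, nsmul_eq_mul] at this
  rw [load]
  linarith

theorem load_le_card_div_two (h : ∀ i ∈ P, itemSize l i ≤ 1 / 2) :
    load l P ≤ P.card / 2 := by
  have := sum_le_card_nsmul P (itemSize l) (1 / 2) h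
  rw [nsmul_eq_mul] at this
  rw [load]
  linarith

theorem card_indicesOf_append_of_pos (hx : p x) :
    (indicesOf p (l ++ [x])).card = (indicesOf p l).card + 1 := by
  rw [indicesOf_append_of_pos hx, card_insert_of_notMem (length_notMem indicesOf_subset_range)]

theorem classPart_append_insert_of_pos (hP : P ⊆ range l.length) (hx : p x) :
    classPart p (l ++ [x]) (insert l.length P) = insert l.length (classPart p l P) := by
  rw [classPart, filter_insert, if_pos (by rwa [itemSize_append_length]), ← classPart,
    classPart_append hP]

theorem classPart_append_insert_of_neg (hP : P ⊆ range l.length) (hx : ¬ p x) :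
    classPart p (l ++ [x]) (insert l.length P) = classPart p l P := by
  rw [classPart, filter_insert, if_neg (by rwa [itemSize_append_length]), ← classPart,
    classPart_append hP]

end Items

def EveryArrival (Q : List ℝ → ℝ → Prop) (l : List ℝ) : Prop :=
  ∀ k < l.length, Q (l.take k) (itemSize l k)

theorem everyArrival_nil (Q : List ℝ → ℝ → Prop) : EveryArrival Q [] :=
  fun _ hk => absurd hk (Nat.not_lt_zero _)

theorem EveryArrival.append {Q : List ℝ → ℝ → Prop} {l : List ℝ} {x : ℝ}
    (h : EveryArrival Q l) (hx : Q l x) : EveryArrival Q (l ++ [x]) := by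
  intro k hk
  rw [List.length_append, List.length_singleton] at hk
  rcases (Nat.lt_succ_iff.mp hk).lt_or_eq with hk | rfl
  · rw [List.take_append_of_le_length hk.le, itemSize_append_of_lt hk]
    exact h k hk
  · rwa [List.take_left' rfl, itemSize_append_length]

theorem EveryArrival.apply {Q : List ℝ → ℝ → Prop} {l : List ℝ} {p : ℝ → Prop}
    (h : EveryArrival Q l) {k : ℕ} (hk : k ∈ indicesOf p l) : Q (l.take k) (itemSize l k) :=
  h k (mem_indicesOf.mp hk).1

/-- Arguments: the items seen so far, the current packing, the size of the arriving item. -/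
abbrev Step := List ℝ → Finset ℕ → ℝ → Finset ℕ

namespace Step

variable (st : Step)

def run (l : List ℝ) : Finset ℕ :=
  (l.foldl (fun s x => (s.1 ++ [x], st s.1 s.2 x)) ([], ∅)).2

theorem foldl_fst (l : List ℝ) (s : List ℝ × Finset ℕ) :
    (l.foldl (fun s x => (s.1 ++ [x], st s.1 s.2 x)) s).1 = s.1 ++ l := by
  induction l generalizing s with
  | nil => simp
  | cons y t ih => simp [ih]

@[simp]
theorem run_nil : st.run [] = ∅ := rfl

theorem run_append (l : List ℝ) (x : ℝ) : st.run (l ++ [x]) = st l (st.run l) x := by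
  simp only [run, List.foldl_append, List.foldl_cons, List.foldl_nil, foldl_fst, List.nil_append]

def IsOnline : Prop := ∀ l P x, st l P x ⊆ insert l.length P

variable {st}

theorem IsOnline.run_subset_range (hst : st.IsOnline) (l : List ℝ) :
    st.run l ⊆ range l.length := by
  induction l using List.reverseRecOn with
  | nil => simp
  | append_singleton l x ih =>
    rw [run_append, List.length_append, List.length_singleton, range_add_one]
    exact (hst l _ x).trans (insert_subset_insert _ ih)

def toAlg (hst : st.IsOnline) (hcap : ∀ l, ValidInstance l → load l (st.run l) ≤ 1) :
    OnlineAlg where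
  pack := st.run
  pack_subset l _ := hst.run_subset_range l
  pack_capacity := hcap
  pack_online l x _ := by
    rw [run_append, union_comm, ← insert_eq]
    exact hst l _ x

variable (st)

def freeze : Step := fun l P x => if 3 / 4 ≤ load l P then P else st l P x

variable {st}

theorem IsOnline.freeze (hst : st.IsOnline) : st.freeze.IsOnline := by
  intro l P x
  unfold Step.freeze
  split_ifs
  · exact subset_insert _ _
  · exact hst l P x

end Step

def IsGood (Act : List ℝ → Finset ℕ → Prop) (l : List ℝ) (P : Finset ℕ) : Prop :=
  load l P ≤ 1 ∧ (3 / 4 ≤ load l P ∨ Act l P)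

theorem IsGood.of_frozen {Act : List ℝ → Finset ℕ → Prop} {l : List ℝ} {P : Finset ℕ}
    (h₁ : load l P ≤ 1) (h₂ : 3 / 4 ≤ load l P) : IsGood Act l P :=
  ⟨h₁, Or.inl h₂⟩

theorem IsGood.of_act {Act : List ℝ → Finset ℕ → Prop} {l : List ℝ} {P : Finset ℕ}
    (h₁ : load l P ≤ 1) (h₂ : Act l P) : IsGood Act l P :=
  ⟨h₁, Or.inr h₂⟩

theorem IsGood.of_lt {Act : List ℝ → Finset ℕ → Prop} {l : List ℝ} {P : Finset ℕ}
    (h : load l P < 3 / 4 → Act l P) (h₁ : load l P ≤ 1) : IsGood Act l P := by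
  by_cases h₂ : 3 / 4 ≤ load l P
  · exact .of_frozen h₁ h₂
  · exact .of_act h₁ (h (not_le.mp h₂))

theorem IsGood.act_of_lt {Act : List ℝ → Finset ℕ → Prop} {l : List ℝ} {P : Finset ℕ}
    (h : IsGood Act l P) (hlt : load l P < 3 / 4) : Act l P :=
  h.2.resolve_left (not_le.mpr hlt)

theorem Step.IsOnline.isGood_freeze_run {st : Step} (hst : st.IsOnline)
    {Act : List ℝ → Finset ℕ → Prop} (h₀ : Act [] ∅)
    (hstep : ∀ l P x, ValidInstance (l ++ [x]) → P ⊆ range l.length → Act l P →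
      load l P < 3 / 4 → IsGood Act (l ++ [x]) (st l P x))
    (l : List ℝ) (hl : ValidInstance l) : IsGood Act l (st.freeze.run l) := by
  induction l using List.reverseRecOn with
  | nil => exact .of_act (by simp [load]) h₀
  | append_singleton l x ih =>
    have hP := hst.freeze.run_subset_range l
    obtain ⟨hcap, hact⟩ := ih (ValidInstance.of_append hl).1
    rw [Step.run_append, Step.freeze]
    split_ifs with hfrozen
    · rw [IsGood, load_append hP]
      exact ⟨hcap, Or.inl hfrozen⟩
    · exact hstep l _ x hl hP (hact.resolve_left hfrozen) (not_le.mp hfrozen)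

def topUp (l : List ℝ) (θ : ℝ) (S : Finset ℕ) : Finset ℕ :=
  if h : ∃ T ⊆ S, load l T ∈ Set.Icc θ (θ + 1 / 4) then h.choose else S

theorem topUp_subset (l : List ℝ) (θ : ℝ) (S : Finset ℕ) : topUp l θ S ⊆ S := by
  unfold topUp
  split_ifs with h
  · exact h.choose_spec.1
  · exact subset_rfl

theorem load_topUp_mem_Icc {l : List ℝ} {θ : ℝ} {S : Finset ℕ}
    (hS : ∀ i ∈ S, IsTiny (itemSize l i)) (hθ : 0 ≤ θ + 1 / 4) (hθS : θ ≤ load l S) :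
    load l (topUp l θ S) ∈ Set.Icc θ (θ + 1 / 4) := by
  have h : ∃ T ⊆ S, load l T ∈ Set.Icc θ (θ + 1 / 4) :=
    exists_subset_sum_mem_Icc (itemSize l) hθ S hS hθS
  rw [topUp, dif_pos h]
  exact h.choose_spec.2

section SmallMediums

def smallMediumsStep : Step := fun l P x =>
  if IsMedium x then
    if load l P + x ≤ 1 then insert l.length P
    else if h : ∃ i ∈ P, (∀ j ∈ P, itemSize l j ≤ itemSize l i) ∧ x < itemSize l i then
      insert l.length (P.erase h.choose)
    else P
  else if h : IsLarge x ∧ ∃ i ∈ P, itemSize l i + x ≤ 1 then {h.2.choose, l.length}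
  else P

theorem smallMediumsStep_isOnline : smallMediumsStep.IsOnline := by
  intro l P x
  unfold smallMediumsStep
  split_ifs with _ _ _ h
  · exact subset_rfl
  · exact insert_subset_insert _ (erase_subset _ _)
  · exact subset_insert _ _
  · exact insert_subset_iff.mpr ⟨mem_insert_of_mem h.2.choose_spec.1, by simp⟩
  · exact subset_insert _ _

def OverflowsWithMediums (l : List ℝ) (x : ℝ) : Prop :=
  (IsMedium x → ∀ i ∈ indicesOf IsMedium l, ∀ j ∈ indicesOf IsMedium l, i ≠ j →
    1 < itemSize l i + itemSize l j + x) ∧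
  (IsLarge x → ∀ i ∈ indicesOf IsMedium l, 1 < itemSize l i + x)

structure SmallMediumsInv (l : List ℝ) (P : Finset ℕ) : Prop where
  medium : ∀ i ∈ P, IsMedium (itemSize l i)
  smallest : ∀ j ∈ indicesOf IsMedium l, j ∉ P → ∀ i ∈ P, itemSize l i ≤ itemSize l j
  card_eq : P.card = min 2 (indicesOf IsMedium l).card
  arrivals : EveryArrival OverflowsWithMediums l

variable {l : List ℝ} {P : Finset ℕ} {x : ℝ}

namespace SmallMediumsInv

theorem subset (h : SmallMediumsInv l P) (hP : P ⊆ range l.length) :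
    P ⊆ indicesOf IsMedium l :=
  fun i hi => mem_indicesOf.mpr ⟨mem_range.mp (hP hi), h.medium i hi⟩

theorem exists_le (h : SmallMediumsInv l P) {i : ℕ} (hi : i ∈ indicesOf IsMedium l) :
    ∃ a ∈ P, itemSize l a ≤ itemSize l i := by
  by_cases hiP : i ∈ P
  · exact ⟨i, hiP, le_rfl⟩
  · obtain ⟨a, ha⟩ : P.Nonempty := by
      rw [← card_pos, h.card_eq]
      have := card_pos.mpr ⟨i, hi⟩
      omega
    exact ⟨a, ha, h.smallest i hi hiP a ha⟩

theorem overflows (h : SmallMediumsInv l P) (hcard : P.card = 2) (hfit : 1 < load l P + x)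
    (hL : ¬ IsLarge x) : OverflowsWithMediums l x :=
  ⟨fun _ i hi j hj hij => by
    have : load l P ≤ itemSize l i + itemSize l j :=
      sum_le_add_of_card_eq_two hcard h.smallest hi hj hij
    linarith,
   fun hL' => absurd hL' hL⟩

theorem append_self (h : SmallMediumsInv l P) (hP : P ⊆ range l.length)
    (hnew : IsMedium x → 2 ≤ P.card ∧ ∀ i ∈ P, itemSize l i ≤ x)
    (harr : OverflowsWithMediums l x) : SmallMediumsInv (l ++ [x]) P := by
  refine ⟨fun i hi => ?_, fun j hj hjP i hi => ?_, ?_, h.arrivals.append harr⟩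
  · rw [itemSize_append_of_mem hP hi]
    exact h.medium i hi
  · rw [itemSize_append_of_mem hP hi]
    by_cases hM : IsMedium x
    · rw [indicesOf_append_of_pos hM, mem_insert] at hj
      rcases hj with rfl | hj
      · rw [itemSize_append_length]
        exact (hnew hM).2 i hi
      · rw [itemSize_append_of_lt (mem_indicesOf.mp hj).1]
        exact h.smallest j hj hjP i hi
    · rw [indicesOf_append_of_neg hM] at hj
      rw [itemSize_append_of_lt (mem_indicesOf.mp hj).1]
      exact h.smallest j hj hjP i hi
  · by_cases hM : IsMedium x
    · rw [card_indicesOf_append_of_pos hM]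
      have := h.card_eq
      have := (hnew hM).1
      omega
    · rw [indicesOf_append_of_neg hM]
      exact h.card_eq

theorem append_insert (h : SmallMediumsInv l P) (hP : P ⊆ range l.length) (hM : IsMedium x)
    (hcard : P.card ≤ 1) : SmallMediumsInv (l ++ [x]) (insert l.length P) := by
  have hcardM : (indicesOf IsMedium l).card ≤ 1 := by have := h.card_eq; omega
  have hPM : P = indicesOf IsMedium l :=
    eq_of_subset_of_card_le (h.subset hP) (by have := h.card_eq; omega)
  refine ⟨fun i hi => ?_, fun j hj hjP => ?_, ?_, h.arrivals.append ⟨fun _ i hi j hj hij => ?_,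
    fun hL => absurd hL (by linarith [hM.2])⟩⟩
  · rcases mem_insert.mp hi with rfl | hi
    · rwa [itemSize_append_length]
    · rw [itemSize_append_of_mem hP hi]
      exact h.medium i hi
  · rw [indicesOf_append_of_pos hM, ← hPM] at hj
    exact absurd hj hjP
  · rw [card_indicesOf_append_of_pos hM, card_insert_of_notMem (length_notMem hP)]
    have := h.card_eq
    omega
  · exact absurd (card_le_one.mp hcardM i hi j hj) hij

theorem append_swap (h : SmallMediumsInv l P) (hP : P ⊆ range l.length) (hM : IsMedium x)
    (hcard : P.card = 2) {m : ℕ} (hm : m ∈ P)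
    (hmax : ∀ j ∈ P, itemSize l j ≤ itemSize l m)
    (hxm : x < itemSize l m) (harr : OverflowsWithMediums l x) :
    SmallMediumsInv (l ++ [x]) (insert l.length (P.erase m)) := by
  have hsub : P.erase m ⊆ P := erase_subset m P
  refine ⟨fun i hi => ?_, fun j hj hjP i hi => ?_, ?_, h.arrivals.append harr⟩
  · rcases mem_insert.mp hi with rfl | hi
    · rwa [itemSize_append_length]
    · rw [itemSize_append_of_mem hP (hsub hi)]
      exact h.medium i (hsub hi)
  · rw [indicesOf_append_of_pos hM, mem_insert] at hj
    rcases hj with rfl | hj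
    · exact absurd (mem_insert_self _ _) hjP
    have hjm : j = m ∨ j ∉ P := by
      by_contra! hcon
      exact hjP (mem_insert_of_mem (mem_erase.mpr hcon))
    have hvm : itemSize l m ≤ itemSize l j := by
      rcases hjm with rfl | hjP'
      · exact le_rfl
      · exact h.smallest j hj hjP' m hm
    rw [itemSize_append_of_lt (mem_indicesOf.mp hj).1]
    rcases mem_insert.mp hi with rfl | hi
    · rw [itemSize_append_length]
      linarith
    · rw [itemSize_append_of_mem hP (hsub hi)]
      rcases hjm with rfl | hjP'
      · exact hmax i (hsub hi)
      · exact h.smallest j hj hjP' i (hsub hi)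
  · have hle := card_le_card (h.subset hP)
    rw [card_indicesOf_append_of_pos hM, card_insert_of_notMem
      (fun hn => length_notMem hP (hsub hn)), card_erase_of_mem hm]
    omega

theorem card_eq_two_of_not_fit (h : SmallMediumsInv l P) (hM : IsMedium x)
    (hfit : ¬ load l P + x ≤ 1) : P.card = 2 := by
  have hle := load_le_card_div_two fun i hi => (h.medium i hi).2
  have : P.card ≤ 2 := by have := h.card_eq; omega
  by_contra hne
  have : (P.card : ℝ) ≤ 1 := by exact_mod_cast (show P.card ≤ 1 by omega)
  exact hfit (by linarith [hM.2])

end SmallMediumsInv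

theorem smallMediumsInv_step (hv : ValidInstance (l ++ [x])) (hP : P ⊆ range l.length)
    (h : SmallMediumsInv l P) (hlt : load l P < 3 / 4) :
    IsGood SmallMediumsInv (l ++ [x]) (smallMediumsStep l P x) := by
  obtain ⟨-, -, hx1⟩ := ValidInstance.of_append hv
  have hcap : load (l ++ [x]) P ≤ 1 := by rw [load_append hP]; linarith
  unfold smallMediumsStep
  split_ifs with hM hfit hswap hLfit
  · have hload := load_append_insert (x := x) hP
    by_cases hcard : P.card ≤ 1
    · exact .of_lt (fun _ => h.append_insert hP hM hcard) (by linarith)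
    · have hcard2 : (P.card : ℝ) = 2 := by
        have := h.card_eq
        exact_mod_cast (show P.card = 2 by omega)
      have := card_div_four_lt_load (l := l) (card_pos.mp (by omega))
        fun i hi => (h.medium i hi).1
      exact .of_frozen (by linarith) (by linarith [hM.1])
  · have hcard := h.card_eq_two_of_not_fit hM hfit
    obtain ⟨hm, hmax, hxm⟩ := hswap.choose_spec
    have hload := load_append_insert (x := x) ((erase_subset hswap.choose P).trans hP)
    have hsplit := load_erase_add (l := l) hm
    refine .of_lt (fun _ => h.append_swap hP hM hcard hm hmax hxm ?_) (by linarith)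
    exact h.overflows hcard (by linarith) (by linarith [hM.2])
  · have hcard := h.card_eq_two_of_not_fit hM hfit
    obtain ⟨m, hm, hmax⟩ := exists_max_image P (itemSize l) (card_pos.mp (by omega))
    push Not at hswap
    have hxle : ∀ i ∈ P, itemSize l i ≤ x := fun i hi => (hmax i hi).trans (hswap m hm hmax)
    exact .of_act hcap (h.append_self hP (fun _ => ⟨hcard.ge, hxle⟩)
      (h.overflows hcard (by linarith) (by linarith [hM.2])))
  · obtain ⟨hi, hfit'⟩ := hLfit.2.choose_spec
    have hne : hLfit.2.choose ≠ l.length := fun heq => length_notMem hP (heq ▸ hi)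
    have hload : load (l ++ [x]) {hLfit.2.choose, l.length} = itemSize l hLfit.2.choose + x := by
      rw [load_pair hne, itemSize_append_of_mem hP hi, itemSize_append_length]
    have := (h.medium _ hi).1
    exact .of_frozen (by linarith) (by linarith [hLfit.1])
  · refine .of_act hcap (h.append_self hP (fun hM' => absurd hM' hM)
      ⟨fun hM' => absurd hM' hM, fun hL i hi => ?_⟩)
    obtain ⟨a, ha, hle⟩ := h.exists_le hi
    have : 1 < itemSize l a + x := not_le.mp fun hle' => hLfit ⟨hL, a, ha, hle'⟩
    linarith

theorem isGood_smallMediums (l : List ℝ) (hl : ValidInstance l) :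
    IsGood SmallMediumsInv l (smallMediumsStep.freeze.run l) :=
  smallMediumsStep_isOnline.isGood_freeze_run
    ⟨by simp, by simp [indicesOf, classPart], by simp [indicesOf, classPart],
      everyArrival_nil _⟩
    (fun _ _ _ => smallMediumsInv_step) l hl

def smallMediumsAlg : OnlineAlg :=
  smallMediumsStep.freeze.toAlg smallMediumsStep_isOnline.freeze
    fun l hl => (isGood_smallMediums l hl).1

end SmallMediums

section LargeMediums

def largeMediumsStep : Step := fun l P x =>
  if IsTiny x then insert l.length P
  else if IsMedium x then
    if load l P + x ≤ 1 then insert l.length P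
    else if (classPart IsMedium l P).card ≤ 1 then
      insert l.length (topUp l (3 / 4 - (load l (classPart IsMedium l P) + x))
        (classPart IsTiny l P) ∪ classPart IsMedium l P)
    else if h : ∃ i ∈ classPart IsMedium l P,
        (∀ j ∈ classPart IsMedium l P, itemSize l i ≤ itemSize l j) ∧ itemSize l i < x then
      insert l.length (P.erase h.choose)
    else P
  else P

theorem largeMediumsStep_isOnline : largeMediumsStep.IsOnline := by
  intro l P x
  unfold largeMediumsStep
  split_ifs
  · exact subset_rfl
  · exact subset_rfl
  · exact insert_subset_insert _
      (union_subset ((topUp_subset _ _ _).trans classPart_subset) classPart_subset)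
  · exact insert_subset_insert _ (erase_subset _ _)
  · exact subset_insert _ _
  · exact subset_insert _ _

structure LargeMediumsInv (l : List ℝ) (P : Finset ℕ) : Prop where
  tinies_subset : indicesOf IsTiny l ⊆ P
  tiny_or_medium : ∀ i ∈ P, IsTiny (itemSize l i) ∨ IsMedium (itemSize l i)
  card_eq : (classPart IsMedium l P).card = min 2 (indicesOf IsMedium l).card
  largest : ∀ j ∈ indicesOf IsMedium l, j ∉ P →
    ∀ i ∈ classPart IsMedium l P, itemSize l j ≤ itemSize l i

variable {l : List ℝ} {P : Finset ℕ} {x : ℝ}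

namespace LargeMediumsInv

theorem load_eq (h : LargeMediumsInv l P) :
    load l P = load l (classPart IsMedium l P) + load l (classPart IsTiny l P) := by
  rw [← load_classPart_add_load_classPart_not (p := IsMedium)]
  congr 2
  ext i
  simp only [mem_classPart]
  exact and_congr_right fun hi => ⟨(h.tiny_or_medium i hi).resolve_right,
    fun hT hM => by linarith [hM.1]⟩

theorem append_self (h : LargeMediumsInv l P) (hP : P ⊆ range l.length) (hT : ¬ IsTiny x)
    (hnew : IsMedium x → 2 ≤ (classPart IsMedium l P).card ∧
      ∀ i ∈ classPart IsMedium l P, x ≤ itemSize l i) :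
    LargeMediumsInv (l ++ [x]) P := by
  refine ⟨?_, fun i hi => ?_, ?_, fun j hj hjP i hi => ?_⟩
  · rw [indicesOf_append_of_neg hT]
    exact h.tinies_subset
  · rw [itemSize_append_of_mem hP hi]
    exact h.tiny_or_medium i hi
  · rw [classPart_append hP]
    by_cases hM : IsMedium x
    · rw [card_indicesOf_append_of_pos hM]
      have := h.card_eq
      have := (hnew hM).1
      omega
    · rw [indicesOf_append_of_neg hM]
      exact h.card_eq
  · rw [classPart_append hP] at hi
    rw [itemSize_append_of_mem hP (mem_classPart.mp hi).1]
    by_cases hM : IsMedium x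
    · rw [indicesOf_append_of_pos hM, mem_insert] at hj
      rcases hj with rfl | hj
      · rw [itemSize_append_length]
        exact (hnew hM).2 i hi
      · rw [itemSize_append_of_lt (mem_indicesOf.mp hj).1]
        exact h.largest j hj hjP i hi
    · rw [indicesOf_append_of_neg hM] at hj
      rw [itemSize_append_of_lt (mem_indicesOf.mp hj).1]
      exact h.largest j hj hjP i hi

theorem append_insert_tiny (h : LargeMediumsInv l P) (hP : P ⊆ range l.length)
    (hT : IsTiny x) : LargeMediumsInv (l ++ [x]) (insert l.length P) := by
  have hM : ¬ IsMedium x := fun hM => by linarith [hM.1]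
  refine ⟨?_, fun i hi => ?_, ?_, fun j hj hjP i hi => ?_⟩
  · rw [indicesOf_append_of_pos hT]
    exact insert_subset_insert _ h.tinies_subset
  · rcases mem_insert.mp hi with rfl | hi
    · rw [itemSize_append_length]
      exact Or.inl hT
    · rw [itemSize_append_of_mem hP hi]
      exact h.tiny_or_medium i hi
  · rw [classPart_append_insert_of_neg hP hM, indicesOf_append_of_neg hM]
    exact h.card_eq
  · rw [classPart_append_insert_of_neg hP hM] at hi
    rw [indicesOf_append_of_neg hM] at hj
    rw [itemSize_append_of_mem hP (mem_classPart.mp hi).1,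
      itemSize_append_of_lt (mem_indicesOf.mp hj).1]
    exact h.largest j hj (fun hjP' => hjP (mem_insert_of_mem hjP')) i hi

theorem append_insert_medium (h : LargeMediumsInv l P) (hP : P ⊆ range l.length)
    (hM : IsMedium x) (hcard : (classPart IsMedium l P).card ≤ 1) :
    LargeMediumsInv (l ++ [x]) (insert l.length P) := by
  have hT : ¬ IsTiny x := fun hT => by linarith [hM.1]
  have hQM : classPart IsMedium l P = indicesOf IsMedium l :=
    eq_of_subset_of_card_le (classPart_subset_indicesOf hP) (by have := h.card_eq; omega)
  refine ⟨?_, fun i hi => ?_, ?_, fun j hj hjP => ?_⟩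
  · rw [indicesOf_append_of_neg hT]
    exact h.tinies_subset.trans (subset_insert _ _)
  · rcases mem_insert.mp hi with rfl | hi
    · rw [itemSize_append_length]
      exact Or.inr hM
    · rw [itemSize_append_of_mem hP hi]
      exact h.tiny_or_medium i hi
  · rw [classPart_append_insert_of_pos hP hM, card_indicesOf_append_of_pos hM,
      card_insert_of_notMem fun hn => length_notMem hP (classPart_subset hn)]
    have := h.card_eq
    omega
  · rw [indicesOf_append_of_pos hM, ← hQM, mem_insert] at hj
    rcases hj with rfl | hj
    · exact absurd (mem_insert_self _ _) hjP
    · exact absurd (mem_insert_of_mem (classPart_subset hj)) hjP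

theorem append_swap (h : LargeMediumsInv l P) (hP : P ⊆ range l.length) (hM : IsMedium x)
    (hcard : (classPart IsMedium l P).card = 2) {m : ℕ} (hm : m ∈ classPart IsMedium l P)
    (hmin : ∀ j ∈ classPart IsMedium l P, itemSize l m ≤ itemSize l j)
    (hxm : itemSize l m < x) : LargeMediumsInv (l ++ [x]) (insert l.length (P.erase m)) := by
  have hT : ¬ IsTiny x := fun hT => by linarith [hM.1]
  have hmP := (mem_classPart.mp hm).1
  have hsub : P.erase m ⊆ P := erase_subset m P
  have hsub' : P.erase m ⊆ range l.length := hsub.trans hP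
  have hQ' : classPart IsMedium (l ++ [x]) (insert l.length (P.erase m)) =
      insert l.length ((classPart IsMedium l P).erase m) := by
    rw [classPart_append_insert_of_pos hsub' hM, classPart, filter_erase, ← classPart]
  refine ⟨?_, fun i hi => ?_, ?_, fun j hj hjP i hi => ?_⟩
  · rw [indicesOf_append_of_neg hT]
    intro j hj
    have hjm : j ≠ m := by
      rintro rfl
      linarith [(mem_indicesOf.mp hj).2, (mem_classPart.mp hm).2.1]
    exact mem_insert_of_mem (mem_erase.mpr ⟨hjm, h.tinies_subset hj⟩)
  · rcases mem_insert.mp hi with rfl | hi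
    · rw [itemSize_append_length]
      exact Or.inr hM
    · rw [itemSize_append_of_mem hP (hsub hi)]
      exact h.tiny_or_medium i (hsub hi)
  · have hle := card_le_card (classPart_subset_indicesOf (p := IsMedium) hP)
    rw [hQ', card_indicesOf_append_of_pos hM, card_insert_of_notMem
      (fun hn => length_notMem hP (classPart_subset (mem_of_mem_erase hn))),
      card_erase_of_mem hm]
    omega
  · rw [indicesOf_append_of_pos hM, mem_insert] at hj
    rcases hj with rfl | hj
    · exact absurd (mem_insert_self _ _) hjP
    have hjm : j = m ∨ j ∉ P := by
      by_contra! hcon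
      exact hjP (mem_insert_of_mem (mem_erase.mpr hcon))
    have hvm : itemSize l j ≤ itemSize l m := by
      rcases hjm with rfl | hjP'
      · exact le_rfl
      · exact h.largest j hj hjP' m hm
    rw [itemSize_append_of_lt (mem_indicesOf.mp hj).1]
    rw [hQ', mem_insert] at hi
    rcases hi with rfl | hi
    · rw [itemSize_append_length]
      linarith
    · rw [itemSize_append_of_mem hP (classPart_subset (mem_of_mem_erase hi))]
      rcases hjm with rfl | hjP'
      · exact hmin i (mem_of_mem_erase hi)
      · exact h.largest j hj hjP' i (mem_of_mem_erase hi)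

theorem load_append_insert_topUp_mem_Icc (h : LargeMediumsInv l P) (hP : P ⊆ range l.length)
    (hM : IsMedium x) (hfit : ¬ load l P + x ≤ 1) (hcard : (classPart IsMedium l P).card ≤ 1) :
    load (l ++ [x]) (insert l.length (topUp l (3 / 4 - (load l (classPart IsMedium l P) + x))
      (classPart IsTiny l P) ∪ classPart IsMedium l P)) ∈ Set.Icc (3 / 4) 1 := by
  have hloadEq := h.load_eq
  set Q := classPart IsMedium l P
  set S := topUp l (3 / 4 - (load l Q + x)) (classPart IsTiny l P)
  have hQhalf : load l Q ≤ 1 / 2 := by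
    have := load_le_card_div_two (l := l) (P := Q) fun i hi => (mem_classPart.mp hi).2.2
    have : (Q.card : ℝ) ≤ 1 := by exact_mod_cast hcard
    linarith
  have hmem : load l S ∈ Set.Icc (3 / 4 - (load l Q + x)) (3 / 4 - (load l Q + x) + 1 / 4) :=
    load_topUp_mem_Icc (fun i hi => (mem_classPart.mp hi).2) (by linarith [hM.2]) (by linarith)
  have hdisj : Disjoint S Q := disjoint_left.mpr fun i hiS hiQ => by
    linarith [(mem_classPart.mp (topUp_subset _ _ _ hiS)).2, (mem_classPart.mp hiQ).2.1]
  have hSP : S ∪ Q ⊆ P :=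
    union_subset ((topUp_subset _ _ _).trans classPart_subset) classPart_subset
  rw [load_append_insert (hSP.trans hP), load_union hdisj]
  exact ⟨by linarith [hmem.1], by linarith [hmem.2]⟩

end LargeMediumsInv

theorem largeMediumsInv_step (hv : ValidInstance (l ++ [x])) (hP : P ⊆ range l.length)
    (h : LargeMediumsInv l P) (hlt : load l P < 3 / 4) :
    IsGood LargeMediumsInv (l ++ [x]) (largeMediumsStep l P x) := by
  obtain ⟨hl, -, hx1⟩ := ValidInstance.of_append hv
  have hcap : load (l ++ [x]) P ≤ 1 := by rw [load_append hP]; linarith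
  have hcardEq := h.card_eq
  unfold largeMediumsStep
  set Q := classPart IsMedium l P
  have hQP : Q ⊆ P := classPart_subset
  have hQcard : Q.card ≤ 2 := by omega
  split_ifs with hT hM hfit hcard hswap
  · exact .of_lt (fun _ => h.append_insert_tiny hP hT) (by rw [load_append_insert hP]; linarith)
  · have hload := load_append_insert (x := x) hP
    by_cases hcard : Q.card ≤ 1
    · exact .of_lt (fun _ => h.append_insert_medium hP hM hcard) (by linarith)
    · have hQ2 : (Q.card : ℝ) = 2 := by exact_mod_cast (show Q.card = 2 by omega)
      have := card_div_four_lt_load (l := l) (P := Q) (card_pos.mp (by omega))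
        fun i hi => (mem_classPart.mp hi).2.1
      have := load_mono hl hQP
      exact .of_frozen (by linarith) (by linarith [hM.1])
  · have := h.load_append_insert_topUp_mem_Icc hP hM hfit hcard
    exact .of_frozen this.2 this.1
  · have hcard2 : Q.card = 2 := by omega
    obtain ⟨hm, hmin, hxm⟩ := hswap.choose_spec
    have hload := load_append_insert (x := x) ((erase_subset hswap.choose P).trans hP)
    have hsplit := load_erase_add (l := l) (hQP hm)
    exact .of_lt (fun _ => h.append_swap hP hM hcard2 hm hmin hxm)
      (by linarith [hM.2, (mem_classPart.mp hm).2.1])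
  · have hcard2 : Q.card = 2 := by omega
    obtain ⟨m, hm, hmin⟩ := exists_min_image Q (itemSize l) (card_pos.mp (by omega))
    push Not at hswap
    exact .of_act hcap (h.append_self hP hT fun _ =>
      ⟨hcard2.ge, fun i hi => (hswap m hm hmin).trans (hmin i hi)⟩)
  · exact .of_act hcap (h.append_self hP hT fun hM' => absurd hM' hM)

theorem isGood_largeMediums (l : List ℝ) (hl : ValidInstance l) :
    IsGood LargeMediumsInv l (largeMediumsStep.freeze.run l) :=
  largeMediumsStep_isOnline.isGood_freeze_run
    ⟨by simp [indicesOf, classPart], by simp, by simp [indicesOf, classPart],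
      by simp [indicesOf, classPart]⟩
    (fun _ _ _ => largeMediumsInv_step) l hl

def largeMediumsAlg : OnlineAlg :=
  largeMediumsStep.freeze.toAlg largeMediumsStep_isOnline.freeze
    fun l hl => (isGood_largeMediums l hl).1

end LargeMediums

section SmallestLarge

def smallestLargeStep : Step := fun l P x =>
  if IsLarge x then (if ∃ i ∈ P, itemSize l i ≤ x then P else {l.length})
  else if IsMedium x ∧ ∃ i ∈ P, itemSize l i + x ≤ 1 then insert l.length P
  else P

theorem smallestLargeStep_isOnline : smallestLargeStep.IsOnline := by
  intro l P x
  unfold smallestLargeStep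
  split_ifs <;> simp [subset_insert]

def OverflowsWithLarges (l : List ℝ) (x : ℝ) : Prop :=
  IsMedium x → ∀ i ∈ indicesOf IsLarge l, 1 < itemSize l i + x

structure SmallestLargeInv (l : List ℝ) (P : Finset ℕ) : Prop where
  large : ∀ i ∈ P, IsLarge (itemSize l i)
  card_le_one : P.card ≤ 1
  smallest : ∀ j ∈ indicesOf IsLarge l, ∃ i ∈ P, itemSize l i ≤ itemSize l j
  arrivals : EveryArrival OverflowsWithLarges l

variable {l : List ℝ} {P : Finset ℕ} {x : ℝ}

theorem SmallestLargeInv.append_self (h : SmallestLargeInv l P) (hP : P ⊆ range l.length)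
    (hnew : IsLarge x → ∃ i ∈ P, itemSize l i ≤ x) (harr : OverflowsWithLarges l x) :
    SmallestLargeInv (l ++ [x]) P := by
  refine ⟨fun i hi => ?_, h.card_le_one, fun j hj => ?_, h.arrivals.append harr⟩
  · rw [itemSize_append_of_mem hP hi]
    exact h.large i hi
  · by_cases hL : IsLarge x
    · rw [indicesOf_append_of_pos hL, mem_insert] at hj
      rcases hj with rfl | hj
      · obtain ⟨i, hi, hle⟩ := hnew hL
        exact ⟨i, hi, by rwa [itemSize_append_of_mem hP hi, itemSize_append_length]⟩
      · obtain ⟨i, hi, hle⟩ := h.smallest j hj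
        refine ⟨i, hi, ?_⟩
        rwa [itemSize_append_of_mem hP hi, itemSize_append_of_lt (mem_indicesOf.mp hj).1]
    · rw [indicesOf_append_of_neg hL] at hj
      obtain ⟨i, hi, hle⟩ := h.smallest j hj
      refine ⟨i, hi, ?_⟩
      rwa [itemSize_append_of_mem hP hi, itemSize_append_of_lt (mem_indicesOf.mp hj).1]

theorem SmallestLargeInv.append_singleton (h : SmallestLargeInv l P) (hL : IsLarge x)
    (hsmall : ∀ i ∈ P, x < itemSize l i) : SmallestLargeInv (l ++ [x]) {l.length} := by
  refine ⟨by simpa using hL, by simp, fun j hj => ⟨l.length, mem_singleton_self _, ?_⟩,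
    h.arrivals.append fun hM => absurd hL (by linarith [hM.2])⟩
  rw [indicesOf_append_of_pos hL, mem_insert] at hj
  rcases hj with rfl | hj
  · exact le_rfl
  · obtain ⟨i, hi, hle⟩ := h.smallest j hj
    rw [itemSize_append_length, itemSize_append_of_lt (mem_indicesOf.mp hj).1]
    linarith [hsmall i hi]

theorem smallestLargeInv_step (hv : ValidInstance (l ++ [x])) (hP : P ⊆ range l.length)
    (h : SmallestLargeInv l P) (hlt : load l P < 3 / 4) :
    IsGood SmallestLargeInv (l ++ [x]) (smallestLargeStep l P x) := by
  obtain ⟨-, -, hx1⟩ := ValidInstance.of_append hv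
  have hcap : load (l ++ [x]) P ≤ 1 := by rw [load_append hP]; linarith
  have hnotM : IsLarge x → OverflowsWithLarges l x := fun hL hM => absurd hL (by linarith [hM.2])
  unfold smallestLargeStep
  split_ifs with hL hkeep hfit
  · exact .of_act hcap (h.append_self hP (fun _ => hkeep) (hnotM hL))
  · push Not at hkeep
    exact .of_act (by simpa [load] using hx1) (h.append_singleton hL hkeep)
  · obtain ⟨hM, i, hi, hfit⟩ := hfit
    have hPi : P = {i} :=
      eq_singleton_iff_unique_mem.mpr ⟨hi, fun j hj => card_le_one.mp h.card_le_one j hj i hi⟩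
    have hload : load (l ++ [x]) (insert l.length P) = itemSize l i + x := by
      rw [load_append_insert hP, hPi, load_singleton]
    have := h.large i hi
    exact .of_frozen (by rw [hload]; exact hfit) (by rw [hload]; linarith [hM.1])
  · refine .of_act hcap (h.append_self hP (fun hL' => absurd hL' hL) fun hM j hj => ?_)
    obtain ⟨i, hi, hle⟩ := h.smallest j hj
    have : 1 < itemSize l i + x := not_le.mp fun h' => hfit ⟨hM, i, hi, h'⟩
    linarith

theorem isGood_smallestLarge (l : List ℝ) (hl : ValidInstance l) :
    IsGood SmallestLargeInv l (smallestLargeStep.freeze.run l) :=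
  smallestLargeStep_isOnline.isGood_freeze_run
    ⟨by simp, by simp, by simp [indicesOf, classPart], everyArrival_nil _⟩
    (fun _ _ _ => smallestLargeInv_step) l hl

def smallestLargeAlg : OnlineAlg :=
  smallestLargeStep.freeze.toAlg smallestLargeStep_isOnline.freeze
    fun l hl => (isGood_smallestLarge l hl).1

end SmallestLarge

section LargestLarge

def largestLargeStep : Step := fun l P x =>
  if IsTiny x then insert l.length P
  else if IsLarge x ∧ ∀ i ∈ P, itemSize l i < x then
    insert l.length (if x + load l (classPart IsTiny l P) ≤ 1 then classPart IsTiny l P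
      else topUp l (3 / 4 - x) (classPart IsTiny l P))
  else P

theorem largestLargeStep_isOnline : largestLargeStep.IsOnline := by
  intro l P x
  unfold largestLargeStep
  split_ifs
  · exact subset_rfl
  · exact insert_subset_insert _ classPart_subset
  · exact insert_subset_insert _ ((topUp_subset _ _ _).trans classPart_subset)
  · exact subset_insert _ _

structure LargestLargeInv (l : List ℝ) (P : Finset ℕ) : Prop where
  tinies_subset : indicesOf IsTiny l ⊆ P
  largest : ∀ j ∈ indicesOf IsLarge l, ∃ i ∈ P, itemSize l j ≤ itemSize l i

variable {l : List ℝ} {P : Finset ℕ} {x : ℝ}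

theorem LargestLargeInv.largest_append (h : LargestLargeInv l P) (hP : P ⊆ range l.length)
    (hnew : IsLarge x → ∃ i ∈ P, x ≤ itemSize l i) :
    ∀ j ∈ indicesOf IsLarge (l ++ [x]),
      ∃ i ∈ P, itemSize (l ++ [x]) j ≤ itemSize (l ++ [x]) i := by
  intro j hj
  by_cases hL : IsLarge x
  · rw [indicesOf_append_of_pos hL, mem_insert] at hj
    rcases hj with rfl | hj
    · obtain ⟨i, hi, hle⟩ := hnew hL
      exact ⟨i, hi, by rwa [itemSize_append_of_mem hP hi, itemSize_append_length]⟩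
    · obtain ⟨i, hi, hle⟩ := h.largest j hj
      refine ⟨i, hi, ?_⟩
      rwa [itemSize_append_of_mem hP hi, itemSize_append_of_lt (mem_indicesOf.mp hj).1]
  · rw [indicesOf_append_of_neg hL] at hj
    obtain ⟨i, hi, hle⟩ := h.largest j hj
    refine ⟨i, hi, ?_⟩
    rwa [itemSize_append_of_mem hP hi, itemSize_append_of_lt (mem_indicesOf.mp hj).1]

theorem largestLargeInv_step (hv : ValidInstance (l ++ [x])) (hP : P ⊆ range l.length)
    (h : LargestLargeInv l P) (hlt : load l P < 3 / 4) :
    IsGood LargestLargeInv (l ++ [x]) (largestLargeStep l P x) := by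
  obtain ⟨hl, -, hx1⟩ := ValidInstance.of_append hv
  unfold largestLargeStep
  set T := classPart IsTiny l P
  have hTP : T ⊆ P := classPart_subset
  have htinies : indicesOf IsTiny l ⊆ T := fun j hj =>
    mem_classPart.mpr ⟨h.tinies_subset hj, (mem_indicesOf.mp hj).2⟩
  split_ifs with hT hL hfit
  · refine .of_act (by rw [load_append_insert hP]; linarith) ⟨?_, fun j hj => ?_⟩
    · rw [indicesOf_append_of_pos hT]
      exact insert_subset_insert _ h.tinies_subset
    · obtain ⟨i, hi, hle⟩ := h.largest_append hP (fun hL => absurd hT (by linarith)) j hj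
      exact ⟨i, mem_insert_of_mem hi, hle⟩
  · refine .of_act (by rw [load_append_insert (hTP.trans hP)]; linarith)
      ⟨?_, fun j hj => ⟨l.length, mem_insert_self _ _, ?_⟩⟩
    · rw [indicesOf_append_of_neg hT]
      exact htinies.trans (subset_insert _ _)
    · rw [indicesOf_append_of_pos hL.1, mem_insert] at hj
      rcases hj with rfl | hj
      · exact le_rfl
      · obtain ⟨i, hi, hle⟩ := h.largest j hj
        rw [itemSize_append_length, itemSize_append_of_lt (mem_indicesOf.mp hj).1]
        linarith [hL.2 i hi]
  · have hS := (topUp_subset l (3 / 4 - x) T).trans hTP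
    have hmem := load_topUp_mem_Icc (l := l) (θ := 3 / 4 - x)
      (fun i hi => (mem_classPart.mp hi).2) (by linarith) (by linarith : 3 / 4 - x ≤ load l T)
    have hload := load_append_insert (x := x) (hS.trans hP)
    exact .of_frozen (by linarith [hmem.2]) (by linarith [hmem.1])
  · exact .of_act (by rw [load_append hP]; linarith)
      ⟨by rw [indicesOf_append_of_neg hT]; exact h.tinies_subset,
        h.largest_append hP fun hL' => by
          by_contra! hlt
          exact hL ⟨hL', hlt⟩⟩

theorem isGood_largestLarge (l : List ℝ) (hl : ValidInstance l) :
    IsGood LargestLargeInv l (largestLargeStep.freeze.run l) :=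
  largestLargeStep_isOnline.isGood_freeze_run
    ⟨by simp [indicesOf, classPart], by simp [indicesOf, classPart]⟩
    (fun _ _ _ => largestLargeInv_step) l hl

def largestLargeAlg : OnlineAlg :=
  largestLargeStep.freeze.toAlg largestLargeStep_isOnline.freeze
    fun l hl => (isGood_largestLarge l hl).1

end LargestLarge

theorem gain_eq_load (A : OnlineAlg) (l : List ℝ) : gain A l = load l (A.pack l) := rfl

theorem exists_load_eq_opt (l : List ℝ) :
    ∃ O ⊆ range l.length, load l O ≤ 1 ∧ load l O = OPT l := by
  obtain ⟨O, hO, hEq⟩ := exists_mem_eq_sup'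
    (⟨∅, by simp⟩ : ((range l.length).powerset.filter
      fun P => (∑ i ∈ P, l.getD i 0) ≤ 1).Nonempty) (fun P => ∑ i ∈ P, l.getD i 0)
  obtain ⟨hpow, hle⟩ := mem_filter.mp hO
  exact ⟨O, mem_powerset.mp hpow, hle, hEq.symm⟩

section Analysis

variable {l : List ℝ} {P : Finset ℕ}

theorem load_add_load_tinies_le (hl : ValidInstance l) {Q : Finset ℕ} (hQP : Q ⊆ P)
    (hQ : ∀ q ∈ Q, ¬ IsTiny (itemSize l q)) (hT : indicesOf IsTiny l ⊆ P) :
    load l Q + load l (indicesOf IsTiny l) ≤ load l P :=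
  load_add_load_le hl (disjoint_left.mpr fun q hq hqT => hQ q hq (mem_indicesOf.mp hqT).2) hQP hT

theorem LargestLargeInv.add_load_tinies_le (h : LargestLargeInv l P) (hl : ValidInstance l)
    {i : ℕ} (hi : i ∈ indicesOf IsLarge l) :
    itemSize l i + load l (indicesOf IsTiny l) ≤ load l P := by
  obtain ⟨q, hq, hle⟩ := h.largest i hi
  have := load_add_load_tinies_le hl (singleton_subset_iff.mpr hq)
    (fun q' hq' => by
      rw [mem_singleton.mp hq']
      linarith [(mem_indicesOf.mp hi).2]) h.tinies_subset
  rw [load_singleton] at this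
  linarith

namespace LargeMediumsInv

theorem add_load_tinies_le (h : LargeMediumsInv l P) (hl : ValidInstance l) {i : ℕ}
    (hi : i ∈ indicesOf IsMedium l) :
    itemSize l i + load l (indicesOf IsTiny l) ≤ load l P := by
  obtain ⟨q, hq, hle⟩ : ∃ q ∈ classPart IsMedium l P, itemSize l i ≤ itemSize l q := by
    by_cases hiP : i ∈ P
    · exact ⟨i, mem_classPart.mpr ⟨hiP, (mem_indicesOf.mp hi).2⟩, le_rfl⟩
    · obtain ⟨q, hq⟩ : (classPart IsMedium l P).Nonempty := by
        rw [← card_pos, h.card_eq]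
        have := card_pos.mpr ⟨i, hi⟩
        omega
      exact ⟨q, hq, h.largest i hi hiP q hq⟩
  have := load_add_load_tinies_le hl (singleton_subset_iff.mpr (classPart_subset hq))
    (fun q' hq' => by
      rw [mem_singleton.mp hq']
      linarith [(mem_classPart.mp hq).2.1]) h.tinies_subset
  rw [load_singleton] at this
  linarith

theorem add_add_load_tinies_le (h : LargeMediumsInv l P) (hl : ValidInstance l) {i j : ℕ}
    (hi : i ∈ indicesOf IsMedium l) (hj : j ∈ indicesOf IsMedium l) (hij : i ≠ j) :
    itemSize l i + itemSize l j + load l (indicesOf IsTiny l) ≤ load l P := by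
  have hcard : (classPart IsMedium l P).card = 2 := by
    have := card_le_card (insert_subset_iff.mpr ⟨hi, singleton_subset_iff.mpr hj⟩)
    rw [card_pair hij] at this
    rw [h.card_eq]
    omega
  have hpair : itemSize l i + itemSize l j ≤ load l (classPart IsMedium l P) :=
    add_le_sum_of_card_eq_two hcard (fun j hj hjQ i hi =>
      h.largest j hj (fun hjP => hjQ (mem_classPart.mpr ⟨hjP, (mem_indicesOf.mp hj).2⟩)) i hi)
      hi hj hij
  have := load_add_load_tinies_le (Q := classPart IsMedium l P) hl classPart_subset
    (fun q hq => by linarith [(mem_classPart.mp hq).2.1]) h.tinies_subset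
  linarith

end LargeMediumsInv

theorem one_lt_add_of_medium_of_large (h₁ : EveryArrival OverflowsWithMediums l)
    (h₃ : EveryArrival OverflowsWithLarges l) {i j : ℕ} (hi : i ∈ indicesOf IsMedium l)
    (hj : j ∈ indicesOf IsLarge l) : 1 < itemSize l i + itemSize l j := by
  rcases lt_trichotomy i j with hij | rfl | hji
  · have := (h₁.apply hj).2 (mem_indicesOf.mp hj).2 i (mem_indicesOf_take hij hi)
    rwa [itemSize_take hij] at this
  · linarith [(mem_indicesOf.mp hi).2.2, (mem_indicesOf.mp hj).2]
  · have := h₃.apply hi (mem_indicesOf.mp hi).2 j (mem_indicesOf_take hji hj)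
    rw [itemSize_take hji] at this
    linarith

theorem one_lt_load_of_card_eq_three (h₁ : EveryArrival OverflowsWithMediums l)
    {S : Finset ℕ} (hS : S ⊆ indicesOf IsMedium l) (hcard : S.card = 3) : 1 < load l S := by
  have hne : S.Nonempty := card_pos.mp (by omega)
  have hk := S.max'_mem hne
  obtain ⟨a, b, hab, hEq⟩ := card_eq_two.mp
    (show (S.erase (S.max' hne)).card = 2 by rw [card_erase_of_mem hk, hcard])
  have ha : a ∈ S.erase (S.max' hne) := by rw [hEq]; simp
  have hb : b ∈ S.erase (S.max' hne) := by rw [hEq]; simp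
  have hak := lt_of_le_of_ne (S.le_max' a (mem_of_mem_erase ha)) (ne_of_mem_erase ha)
  have hbk := lt_of_le_of_ne (S.le_max' b (mem_of_mem_erase hb)) (ne_of_mem_erase hb)
  have := (h₁.apply (hS hk)).1 (mem_indicesOf.mp (hS hk)).2 a
    (mem_indicesOf_take hak (hS (mem_of_mem_erase ha))) b
    (mem_indicesOf_take hbk (hS (mem_of_mem_erase hb))) hab
  rw [itemSize_take hak, itemSize_take hbk] at this
  have hload : load l S = itemSize l (S.max' hne) + (itemSize l a + itemSize l b) := by
    rw [load, ← add_sum_erase S _ hk, hEq, sum_pair hab]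
  linarith

theorem load_le_load_classPart_not_tiny_add (hl : ValidInstance l) {O : Finset ℕ}
    (hO : O ⊆ range l.length) :
    load l O ≤ load l (classPart (fun s => ¬ IsTiny s) l O) + load l (indicesOf IsTiny l) := by
  have := load_mono hl (classPart_subset_indicesOf (p := IsTiny) hO)
  linarith [load_classPart_add_load_classPart_not (l := l) (p := IsTiny) (P := O)]

theorem subset_singleton_of_large_mem (h₁ : EveryArrival OverflowsWithMediums l)
    (h₃ : EveryArrival OverflowsWithLarges l) (hl : ValidInstance l) {B : Finset ℕ}
    (hB : ∀ i ∈ B, i ∈ indicesOf IsMedium l ∨ i ∈ indicesOf IsLarge l)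
    (hB1 : load l B ≤ 1) {j : ℕ} (hjB : j ∈ B) (hjL : j ∈ indicesOf IsLarge l) :
    B ⊆ {j} := by
  intro i hiB
  by_contra hij
  have hpair := (load_mono hl
    (insert_subset_iff.mpr ⟨hiB, singleton_subset_iff.mpr hjB⟩)).trans hB1
  rw [load_pair (mem_singleton.not.mp hij)] at hpair
  rcases hB i hiB with hiM | hiL
  · linarith [one_lt_add_of_medium_of_large h₁ h₃ hiM hjL]
  · linarith [(mem_indicesOf.mp hiL).2, (mem_indicesOf.mp hjL).2]

theorem card_le_two_of_subset_mediums (h₁ : EveryArrival OverflowsWithMediums l)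
    (hl : ValidInstance l) {B : Finset ℕ} (hBM : B ⊆ indicesOf IsMedium l)
    (hB1 : load l B ≤ 1) : B.card ≤ 2 := by
  by_contra! hc
  obtain ⟨S, hSB, hS⟩ := exists_subset_card_eq (show 3 ≤ B.card by omega)
  linarith [one_lt_load_of_card_eq_three h₁ (hSB.trans hBM) hS, load_mono hl hSB]

theorem load_le_max_of_invs (hl : ValidInstance l) {P₁ P₂ P₃ P₄ O : Finset ℕ}
    (h₁ : SmallMediumsInv l P₁) (h₂ : LargeMediumsInv l P₂) (h₃ : SmallestLargeInv l P₃)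
    (h₄ : LargestLargeInv l P₄) (hO : O ⊆ range l.length) (hO1 : load l O ≤ 1) :
    load l O ≤ max (load l P₂) (load l P₄) := by
  refine (load_le_load_classPart_not_tiny_add hl hO).trans ?_
  set B := classPart (fun s => ¬ IsTiny s) l O
  have hB1 : load l B ≤ 1 := (load_mono hl classPart_subset).trans hO1
  have hB : ∀ i ∈ B, i ∈ indicesOf IsMedium l ∨ i ∈ indicesOf IsLarge l := by
    intro i hi
    obtain ⟨hiO, hiT⟩ := mem_classPart.mp hi
    have hlen := mem_range.mp (hO hiO)
    rcases le_or_gt (itemSize l i) (1 / 2) with hle | hgt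
    · exact Or.inl (mem_indicesOf.mpr ⟨hlen, not_le.mp hiT, hle⟩)
    · exact Or.inr (mem_indicesOf.mpr ⟨hlen, hgt⟩)
  by_cases hlarge : ∃ j ∈ B, j ∈ indicesOf IsLarge l
  · obtain ⟨j, hjB, hjL⟩ := hlarge
    have hBload := load_mono hl
      (subset_singleton_of_large_mem h₁.arrivals h₃.arrivals hl hB hB1 hjB hjL)
    rw [load_singleton] at hBload
    linarith [h₄.add_load_tinies_le hl hjL, le_max_right (load l P₂) (load l P₄)]
  push Not at hlarge
  have hBM : B ⊆ indicesOf IsMedium l := fun i hi => (hB i hi).resolve_right (hlarge i hi)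
  refine le_trans ?_ (le_max_left _ _)
  rcases (show B.card = 0 ∨ B.card = 1 ∨ B.card = 2 by
    have := card_le_two_of_subset_mediums h₁.arrivals hl hBM hB1; omega) with hc | hc | hc
  · rw [card_eq_zero.mp hc, load, sum_empty, zero_add]
    exact load_mono hl h₂.tinies_subset
  · obtain ⟨i, hi⟩ := card_eq_one.mp hc
    rw [hi, load_singleton]
    exact h₂.add_load_tinies_le hl (hBM (hi ▸ mem_singleton_self i))
  · obtain ⟨i, j, hij, hij'⟩ := card_eq_two.mp hc
    rw [hij', load_pair hij]
    exact h₂.add_add_load_tinies_le hl (hBM (by rw [hij']; simp)) (hBM (by rw [hij']; simp)) hij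

end Analysis

theorem le_four_thirds_mul_max {o g₁ g₂ g₃ g₄ : ℝ} (ho : o ≤ 1) (hg₂ : 0 ≤ g₂)
    (h : g₁ < 3 / 4 → g₂ < 3 / 4 → g₃ < 3 / 4 → g₄ < 3 / 4 → o ≤ max g₂ g₄) :
    o ≤ 4 / 3 * max (max g₁ g₂) (max g₃ g₄) := by
  have h₁ : g₁ ≤ max (max g₁ g₂) (max g₃ g₄) := le_max_of_le_left (le_max_left _ _)
  have h₂ : g₂ ≤ max (max g₁ g₂) (max g₃ g₄) := le_max_of_le_left (le_max_right _ _)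
  have h₃ : g₃ ≤ max (max g₁ g₂) (max g₃ g₄) := le_max_of_le_right (le_max_left _ _)
  have h₄ : g₄ ≤ max (max g₁ g₂) (max g₃ g₄) := le_max_of_le_right (le_max_right _ _)
  by_cases hfrozen : 3 / 4 ≤ max (max g₁ g₂) (max g₃ g₄)
  · linarith
  · have := h (by linarith) (by linarith) (by linarith) (by linarith)
    have := max_le h₂ h₄
    linarith

end

end RemKnap

open RemKnap

/-- There is a strictly `4/3`-competitive online algorithm for the proportional
removable knapsack problem reading two advice bits, i.e. four deterministic
online algorithms the best of which is always within a factor `4/3` of optimal. -/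
theorem remKnap_two_advice_bits_four_thirds_competitive :
    ∃ A₁ A₂ A₃ A₄ : OnlineAlg, ∀ l : List ℝ, ValidInstance l →
      OPT l ≤ (4 / 3) *
        max (max (gain A₁ l) (gain A₂ l)) (max (gain A₃ l) (gain A₄ l)) := by
  refine ⟨smallMediumsAlg, largeMediumsAlg, smallestLargeAlg, largestLargeAlg, fun l hl => ?_⟩
  obtain ⟨O, hO, hO1, hOPT⟩ := exists_load_eq_opt l
  have h₁ : IsGood SmallMediumsInv l (smallMediumsAlg.pack l) := isGood_smallMediums l hl
  have h₂ : IsGood LargeMediumsInv l (largeMediumsAlg.pack l) := isGood_largeMediums l hl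
  have h₃ : IsGood SmallestLargeInv l (smallestLargeAlg.pack l) := isGood_smallestLarge l hl
  have h₄ : IsGood LargestLargeInv l (largestLargeAlg.pack l) := isGood_largestLarge l hl
  rw [gain_eq_load, gain_eq_load, gain_eq_load, gain_eq_load, ← hOPT]
  refine le_four_thirds_mul_max hO1 (load_nonneg hl _) fun g₁ g₂ g₃ g₄ => ?_
  exact load_le_max_of_invs hl (h₁.act_of_lt g₁) (h₂.act_of_lt g₂) (h₃.act_of_lt g₃)
    (h₄.act_of_lt g₄) hO hO1
end

section
/- There exist two deterministic online algorithms A₀ and A₁ for RemKnap such that for every instance l one has OPT(l) ≤ (3/2) · max(gain(A₀, l), gain(A₁, l)). That is, there is a strictly 3/2-competitive online algorithm for the proportional removable knapsack problem reading one advice bit. -/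
open Finset
open scoped Classical

noncomputable section RemKnapAux

def sz (l : List ℝ) (i : ℕ) : ℝ := l.getD i 0

def sSum (l : List ℝ) (P : Finset ℕ) : ℝ := ∑ i ∈ P, sz l i

lemma sz_pos {l : List ℝ} (hl : ValidInstance l) {i : ℕ} (h : i < l.length) : 0 < sz l i := by
  have hm : l.getD i 0 ∈ l := by
    rw [List.getD_eq_getElem l 0 h]; exact List.getElem_mem h
  exact (hl _ hm).1

lemma sz_le_one {l : List ℝ} (hl : ValidInstance l) {i : ℕ} (h : i < l.length) : sz l i ≤ 1 := by
  have hm : l.getD i 0 ∈ l := by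
    rw [List.getD_eq_getElem l 0 h]; exact List.getElem_mem h
  exact (hl _ hm).2

lemma sSum_nonneg {l : List ℝ} (hl : ValidInstance l) {P : Finset ℕ}
    (hP : P ⊆ range l.length) : 0 ≤ sSum l P :=
  Finset.sum_nonneg fun i hi => (sz_pos hl (mem_range.1 (hP hi))).le

lemma single_le_sSum {l : List ℝ} (hl : ValidInstance l) {P : Finset ℕ}
    (hP : P ⊆ range l.length) {j : ℕ} (hj : j ∈ P) : sz l j ≤ sSum l P :=
  Finset.single_le_sum (fun i hi => (sz_pos hl (mem_range.1 (hP hi))).le) hj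

lemma subset_le_sSum {l : List ℝ} (hl : ValidInstance l) {P T : Finset ℕ}
    (hP : P ⊆ range l.length) (hT : T ⊆ P) : sSum l T ≤ sSum l P :=
  Finset.sum_le_sum_of_subset_of_nonneg hT
    (fun i hi _ => (sz_pos hl (mem_range.1 (hP hi))).le)

lemma pair_le_sSum {l : List ℝ} (hl : ValidInstance l) {P : Finset ℕ}
    (hP : P ⊆ range l.length) {a b : ℕ} (ha : a ∈ P) (hb : b ∈ P) (hab : a ≠ b) :
    sz l a + sz l b ≤ sSum l P := by
  have h1 : sSum l {a, b} = sz l a + sz l b := by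
    rw [sSum, Finset.sum_insert (by simp [hab]), Finset.sum_singleton]
  rw [← h1]
  exact subset_le_sSum hl hP (by simp [Finset.insert_subset_iff, ha, hb])

lemma sSum_insert {l : List ℝ} {P : Finset ℕ} {n : ℕ} (h : n ∉ P) :
    sSum l (insert n P) = sz l n + sSum l P := Finset.sum_insert h

lemma sSum_erase {l : List ℝ} {P : Finset ℕ} {j : ℕ} (h : j ∈ P) :
    sSum l (P.erase j) = sSum l P - sz l j := by
  rw [sSum, Finset.sum_erase_eq_sub h]; rfl

lemma sz_append {l : List ℝ} {x : ℝ} {i : ℕ} (h : i < l.length) :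
    sz (l ++ [x]) i = sz l i := by
  unfold sz
  rw [List.getD_eq_getElem _ 0 (by simp; omega), List.getD_eq_getElem l 0 h]
  exact List.getElem_append_left h

lemma valid_of_append {l : List ℝ} {x : ℝ} (h : ValidInstance (l ++ [x])) :
    ValidInstance l := fun s hs => h s (by simp [hs])

end RemKnapAux


noncomputable section RemKnapAlg
open Finset
open scoped Classical

def medSet (l : List ℝ) (P : Finset ℕ) : Finset ℕ := P.filter (fun j => 1/3 < sz l j)

def medIdx (l : List ℝ) (P : Finset ℕ) : ℕ :=
  if h : (medSet l P).Nonempty then (medSet l P).min' h else 0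

def goodT (l : List ℝ) (n : ℕ) (P T : Finset ℕ) : Prop :=
  T ⊆ P ∧ sSum l T + sz l n ≤ 1 ∧ ∀ T' ⊆ P, sSum l T' + sz l n ≤ 1 → sSum l T' ≤ sSum l T

def bestT (l : List ℝ) (n : ℕ) (P : Finset ℕ) : Finset ℕ :=
  if h : ∃ T, goodT l n P T then h.choose else ∅

def step (l : List ℝ) (n : ℕ) (P : Finset ℕ) : Finset ℕ :=
  if (2:ℝ)/3 ≤ sSum l P then P
  else if sSum l P + sz l n ≤ 1 then insert n P
  else if (2:ℝ)/3 ≤ sz l n then {n}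
  else if (medSet l P).Nonempty then
    if sz l (medIdx l P) + sz l n ≤ 1 then {medIdx l P, n}
    else if sz l (medIdx l P) ≤ sz l n then P
    else insert n (P.erase (medIdx l P))
  else insert n (bestT l n P)

def packA (l : List ℝ) : ℕ → Finset ℕ
  | 0 => ∅
  | n+1 => step l n (packA l n)

lemma medIdx_mem {l : List ℝ} {P : Finset ℕ} (h : (medSet l P).Nonempty) :
    medIdx l P ∈ P := by
  unfold medIdx; rw [dif_pos h]
  exact (mem_filter.1 ((medSet l P).min'_mem h)).1

lemma medIdx_medium {l : List ℝ} {P : Finset ℕ} (h : (medSet l P).Nonempty) :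
    1/3 < sz l (medIdx l P) := by
  unfold medIdx; rw [dif_pos h]
  exact (mem_filter.1 ((medSet l P).min'_mem h)).2

lemma bestT_subset {l : List ℝ} {n : ℕ} {P : Finset ℕ} : bestT l n P ⊆ P := by
  unfold bestT
  split
  · next h => exact h.choose_spec.1
  · exact Finset.empty_subset P

lemma step_subset {l : List ℝ} {n : ℕ} {P : Finset ℕ} : step l n P ⊆ insert n P := by
  unfold step
  split_ifs with h1 h2 h3 h4 h5 h6
  · exact Finset.subset_insert n P
  · exact Finset.insert_subset_insert _ (subset_refl P)
  · simp
  · refine Finset.insert_subset ?_ (by simp)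
    exact Finset.mem_insert_of_mem (medIdx_mem h4)
  · exact Finset.subset_insert n P
  · exact Finset.insert_subset (Finset.mem_insert_self n P)
      ((Finset.erase_subset _ _).trans (Finset.subset_insert n P))
  · exact Finset.insert_subset (Finset.mem_insert_self n P)
      (bestT_subset.trans (Finset.subset_insert n P))

lemma packA_subset {l : List ℝ} : ∀ n, packA l n ⊆ range n := by
  intro n
  induction n with
  | zero => simp [packA]
  | succ k ih =>
      show step l k (packA l k) ⊆ range (k+1)
      refine step_subset.trans ?_
      rw [Finset.range_add_one]
      exact Finset.insert_subset_insert _ ih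

lemma step_congr {l l' : List ℝ} {n : ℕ} {P : Finset ℕ}
    (hn : sz l' n = sz l n) (hP : ∀ i ∈ P, sz l' i = sz l i) :
    step l' n P = step l n P := by
  have hs : ∀ T ⊆ P, sSum l' T = sSum l T := fun T hT =>
    Finset.sum_congr rfl (fun i hi => hP i (hT hi))
  have h1 : sSum l' P = sSum l P := hs P (subset_refl P)
  have hms : medSet l' P = medSet l P := Finset.filter_congr fun i hi => by rw [hP i hi]
  have hmi : medIdx l' P = medIdx l P := by unfold medIdx; simp only [hms]
  have hbt : bestT l' n P = bestT l n P := by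
    have hg : goodT l' n P = goodT l n P := funext fun T => propext (by
      constructor
      · rintro ⟨hTP, hfe, hmax⟩
        refine ⟨hTP, by rwa [hs T hTP, hn] at hfe, fun T' hT' hfe' => ?_⟩
        have := hmax T' hT' (by rwa [hs T' hT', hn])
        rwa [hs T' hT', hs T hTP] at this
      · rintro ⟨hTP, hfe, hmax⟩
        refine ⟨hTP, by rw [hs T hTP, hn]; exact hfe, fun T' hT' hfe' => ?_⟩
        rw [hs T' hT', hs T hTP]
        exact hmax T' hT' (by rwa [hs T' hT', hn] at hfe'))
    unfold bestT
    simp only [hg]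
  unfold step
  rw [h1, hn, hmi, hms, hbt]
  by_cases hne : (medSet l P).Nonempty
  · rw [hP _ (medIdx_mem hne)]
  · rw [if_neg hne, if_neg hne]

lemma packA_append (l : List ℝ) (x : ℝ) : ∀ n ≤ l.length, packA (l ++ [x]) n = packA l n := by
  intro n
  induction n with
  | zero => intro _; rfl
  | succ k ih =>
      intro h
      have hk : k < l.length := Nat.lt_of_succ_le h
      show step (l ++ [x]) k (packA (l ++ [x]) k) = step l k (packA l k)
      rw [ih hk.le]
      exact step_congr (sz_append hk)
        (fun i hi => sz_append ((mem_range.1 (packA_subset k hi)).trans hk))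

lemma bestT_spec {l : List ℝ} {n : ℕ} {P : Finset ℕ} (hl : ValidInstance l)
    (hn : n < l.length) : goodT l n P (bestT l n P) := by
  have hex : ∃ T, goodT l n P T := by
    have hne : (P.powerset.filter fun T => sSum l T + sz l n ≤ 1).Nonempty := by
      refine ⟨∅, mem_filter.2 ⟨Finset.empty_mem_powerset P, ?_⟩⟩
      have h0 : sSum l (∅ : Finset ℕ) = 0 := Finset.sum_empty
      rw [h0]; linarith [sz_le_one hl hn]
    obtain ⟨T, hT, hmax⟩ := Finset.exists_max_image _ (sSum l) hne
    have hT' := mem_filter.1 hT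
    refine ⟨T, Finset.mem_powerset.1 hT'.1, hT'.2, fun T' hsub hfe => ?_⟩
    exact hmax T' (mem_filter.2 ⟨Finset.mem_powerset.2 hsub, hfe⟩)
  unfold bestT
  rw [dif_pos hex]
  exact hex.choose_spec

def GoodB (l : List ℝ) (n : ℕ) (P : Finset ℕ) : Prop :=
  sSum l P < 2/3 ∧
  (∀ i < n, sz l i < 2/3) ∧
  (∀ i < n, sz l i ≤ 1/3 → i ∈ P) ∧
  ∀ i < n, 1/3 < sz l i →
    ∃ j ∈ P, 1/3 < sz l j ∧ ∀ k < n, 1/3 < sz l k →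
      sz l j ≤ sz l k ∧ (k ≠ j → 1 < sz l j + sz l k)

def InvA (l : List ℝ) (n : ℕ) (P : Finset ℕ) : Prop :=
  sSum l P ≤ 1 ∧ ((2/3:ℝ) ≤ sSum l P ∨ GoodB l n P)

lemma inv_step {l : List ℝ} (hl : ValidInstance l) {n : ℕ} (hn : n < l.length)
    (H : InvA l n (packA l n)) : InvA l (n+1) (packA l (n+1)) := by
  set P := packA l n with hPdef
  have hsub : P ⊆ range n := packA_subset n
  have hsubl : P ⊆ range l.length := hsub.trans (Finset.range_subset_range.2 hn.le)
  have hnP : n ∉ P := fun h => (Nat.lt_irrefl n) (mem_range.1 (hsub h))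
  have hxpos : 0 < sz l n := sz_pos hl hn
  have hx1 : sz l n ≤ 1 := sz_le_one hl hn
  have hSnn : 0 ≤ sSum l P := sSum_nonneg hl hsubl
  show InvA l (n+1) (step l n P)
  unfold step
  split_ifs with h1 h2 h3 h4 h5 h6
  · exact ⟨H.1, Or.inl h1⟩
  all_goals have hlt : sSum l P < 2/3 := lt_of_not_ge h1
  all_goals have HB : GoodB l n P := H.2.resolve_left h1
  -- branch 2 : fits
  · have hs' : sSum l (insert n P) = sz l n + sSum l P := sSum_insert hnP
    constructor
    · rw [hs']; linarith
    · by_cases hb : (2:ℝ)/3 ≤ sz l n + sSum l P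
      · left; rw [hs']; exact hb
      · right
        have hsum : sz l n + sSum l P < 2/3 := lt_of_not_ge hb
        refine ⟨by rw [hs']; exact hsum, ?_, ?_, ?_⟩
        · intro i hi
          rcases Nat.lt_succ_iff_lt_or_eq.1 hi with hi' | rfl
          · exact HB.2.1 i hi'
          · linarith
        · intro i hi hsm
          rcases Nat.lt_succ_iff_lt_or_eq.1 hi with hi' | rfl
          · exact mem_insert_of_mem (HB.2.2.1 i hi' hsm)
          · exact mem_insert_self _ _
        · intro i hi him
          by_cases hxm : 1/3 < sz l n
          · have hnomed : ∀ k < n, ¬(1/3 < sz l k) := by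
              intro k hk hkm
              obtain ⟨j, hjP, hjm, _⟩ := HB.2.2.2 k hk hkm
              have := single_le_sSum hl hsubl hjP
              linarith
            refine ⟨n, mem_insert_self n P, hxm, ?_⟩
            intro k hk hkm
            rcases Nat.lt_succ_iff_lt_or_eq.1 hk with hk' | rfl
            · exact absurd hkm (hnomed k hk')
            · exact ⟨le_refl _, fun h => absurd rfl h⟩
          · rcases Nat.lt_succ_iff_lt_or_eq.1 hi with hi' | rfl
            · obtain ⟨j, hjP, hjm, hjmin⟩ := HB.2.2.2 i hi' him
              refine ⟨j, mem_insert_of_mem hjP, hjm, ?_⟩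
              intro k hk hkm
              rcases Nat.lt_succ_iff_lt_or_eq.1 hk with hk' | rfl
              · exact hjmin k hk' hkm
              · exact absurd hkm hxm
            · exact absurd him hxm
  all_goals have hov : 1 < sSum l P + sz l n := lt_of_not_ge h2
  all_goals have hx3 : 1/3 < sz l n := by linarith
  -- branch 3 : big item
  · have hs' : sSum l {n} = sz l n := Finset.sum_singleton _ _
    exact ⟨by rw [hs']; exact hx1, Or.inl (by rw [hs']; exact h3)⟩
  all_goals have hx23 : sz l n < 2/3 := lt_of_not_ge h3
  -- branches 4-6 : has a packed medium
  all_goals try {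
    have hjP := medIdx_mem h4
    have hjm := medIdx_medium h4
    have hjn : medIdx l P ≠ n := fun h => hnP (h ▸ hjP)
    have huniq : ∀ k ∈ P, 1/3 < sz l k → k = medIdx l P := by
      intro k hk hkm
      by_contra hne
      have := pair_le_sSum hl hsubl hk hjP hne
      linarith
    have hmin : ∀ k < n, 1/3 < sz l k →
        sz l (medIdx l P) ≤ sz l k ∧ (k ≠ medIdx l P → 1 < sz l (medIdx l P) + sz l k) := by
      have hjn' : medIdx l P < n := mem_range.1 (hsub hjP)
      obtain ⟨j', hj'P, hj'm, hj'min⟩ := HB.2.2.2 _ hjn' hjm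
      have he : j' = medIdx l P := huniq j' hj'P hj'm
      subst he
      exact hj'min
    first
    | -- branch 4 : pair {j, n}
      ( have hsum : sSum l {medIdx l P, n} = sz l (medIdx l P) + sz l n := by
          rw [sSum, Finset.sum_insert (by simp [hjn]), Finset.sum_singleton]
        exact ⟨by rw [hsum]; exact h5, Or.inl (by rw [hsum]; linarith)⟩ )
    | -- branch 5 : keep P
      ( refine ⟨H.1, Or.inr ⟨hlt, ?_, ?_, ?_⟩⟩
        · intro i hi
          rcases Nat.lt_succ_iff_lt_or_eq.1 hi with hi' | rfl
          · exact HB.2.1 i hi'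
          · exact hx23
        · intro i hi hsm
          rcases Nat.lt_succ_iff_lt_or_eq.1 hi with hi' | rfl
          · exact HB.2.2.1 i hi' hsm
          · linarith
        · intro i hi him
          refine ⟨medIdx l P, hjP, hjm, ?_⟩
          intro k hk hkm
          rcases Nat.lt_succ_iff_lt_or_eq.1 hk with hk' | rfl
          · exact hmin k hk' hkm
          · exact ⟨h6, fun _ => by linarith [lt_of_not_ge h5]⟩ )
    | -- branch 6 : swap medium
      ( have hnE : n ∉ P.erase (medIdx l P) := fun h => hnP (Finset.mem_of_mem_erase h)
        have hxj : sz l n < sz l (medIdx l P) := lt_of_not_ge h6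
        have hsum : sSum l (insert n (P.erase (medIdx l P)))
            = sz l n + (sSum l P - sz l (medIdx l P)) := by
          rw [sSum_insert hnE, sSum_erase hjP]
        constructor
        · rw [hsum]; linarith [H.1]
        · right
          refine ⟨by rw [hsum]; linarith, ?_, ?_, ?_⟩
          · intro i hi
            rcases Nat.lt_succ_iff_lt_or_eq.1 hi with hi' | rfl
            · exact HB.2.1 i hi'
            · exact hx23
          · intro i hi hsm
            rcases Nat.lt_succ_iff_lt_or_eq.1 hi with hi' | rfl
            · have hiP := HB.2.2.1 i hi' hsm
              have hij : i ≠ medIdx l P := fun h => by rw [h] at hsm; linarith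
              exact mem_insert_of_mem (Finset.mem_erase.2 ⟨hij, hiP⟩)
            · linarith
          · intro i hi him
            refine ⟨n, mem_insert_self _ _, hx3, ?_⟩
            intro k hk hkm
            rcases Nat.lt_succ_iff_lt_or_eq.1 hk with hk' | rfl
            · have hm := hmin k hk' hkm
              have h5' := lt_of_not_ge h5
              exact ⟨by linarith [hm.1], fun _ => by linarith [hm.1]⟩
            · exact ⟨le_refl _, fun h => absurd rfl h⟩ ) }
  -- branch 7 : all packed items small
  · obtain ⟨hTsub, hTfe, hTmax⟩ := bestT_spec hl hn (P := P)
    have hnT : n ∉ bestT l n P := fun h => hnP (hTsub h)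
    have hsum : sSum l (insert n (bestT l n P)) = sz l n + sSum l (bestT l n P) :=
      sSum_insert hnT
    have hallsmall : ∀ i ∈ P, sz l i ≤ 1/3 := by
      intro i hi
      by_contra hm
      exact h4 ⟨i, mem_filter.2 ⟨hi, lt_of_not_ge hm⟩⟩
    have hTP : bestT l n P ≠ P := by
      intro he; rw [he] at hTfe; linarith
    obtain ⟨y, hyP, hyT⟩ :=
      Finset.exists_of_ssubset (Finset.ssubset_iff_subset_ne.2 ⟨hTsub, hTP⟩)
    have hyfe : ¬(sSum l (insert y (bestT l n P)) + sz l n ≤ 1) := by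
      intro hfe
      have := hTmax _ (Finset.insert_subset hyP hTsub) hfe
      rw [sSum_insert hyT] at this
      linarith [sz_pos hl (mem_range.1 (hsubl hyP))]
    have h23 : 2/3 < sSum l (bestT l n P) + sz l n := by
      rw [sSum_insert hyT] at hyfe
      have := lt_of_not_ge hyfe
      linarith [hallsmall y hyP]
    constructor
    · rw [hsum]; linarith
    · left; rw [hsum]; linarith


lemma invA_packA {l : List ℝ} (hl : ValidInstance l) : ∀ n ≤ l.length, InvA l n (packA l n) := by
  intro n
  induction n with
  | zero =>
      intro _
      refine ⟨by simp [sSum, packA], Or.inr ⟨by simp [sSum, packA], ?_, ?_, ?_⟩⟩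
      · intro i hi; omega
      · intro i hi; omega
      · intro i hi; omega
  | succ k ih =>
      intro h
      exact inv_step hl (Nat.lt_of_succ_le h) (ih (Nat.le_of_succ_le h))

def stepM (l : List ℝ) (n : ℕ) (P : Finset ℕ) : Finset ℕ :=
  if ∃ j ∈ P, sz l n ≤ sz l j then P else {n}

def packM (l : List ℝ) : ℕ → Finset ℕ
  | 0 => ∅
  | n+1 => stepM l n (packM l n)

lemma stepM_subset {l : List ℝ} {n : ℕ} {P : Finset ℕ} : stepM l n P ⊆ insert n P := by
  unfold stepM
  split_ifs
  · exact Finset.subset_insert n P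
  · simp

lemma packM_spec (l : List ℝ) : ∀ n, (packM l n = ∅ ∧ n = 0) ∨
    ∃ j < n, packM l n = {j} ∧ ∀ i < n, sz l i ≤ sz l j := by
  intro n
  induction n with
  | zero => exact Or.inl ⟨rfl, rfl⟩
  | succ k ih =>
      right
      rcases ih with ⟨hP, rfl⟩ | ⟨j, hjk, hP, hmax⟩
      · refine ⟨0, Nat.zero_lt_one, ?_, ?_⟩
        · show stepM l 0 (packM l 0) = {0}
          rw [show packM l 0 = ∅ from rfl, stepM, if_neg (by simp)]
        · intro i hi
          interval_cases i
          exact le_refl _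
      · by_cases hc : sz l k ≤ sz l j
        · refine ⟨j, Nat.lt_succ_of_lt hjk, ?_, ?_⟩
          · show stepM l k (packM l k) = {j}
            rw [hP, stepM, if_pos ⟨j, Finset.mem_singleton_self j, hc⟩]
          · intro i hi
            rcases Nat.lt_succ_iff_lt_or_eq.1 hi with hi' | rfl
            · exact hmax i hi'
            · exact hc
        · refine ⟨k, Nat.lt_succ_self k, ?_, ?_⟩
          · show stepM l k (packM l k) = {k}
            rw [hP, stepM, if_neg]
            rintro ⟨j', hj', hle⟩
            rw [Finset.mem_singleton.1 hj'] at hle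
            exact hc hle
          · intro i hi
            rcases Nat.lt_succ_iff_lt_or_eq.1 hi with hi' | rfl
            · exact le_trans (hmax i hi') (le_of_not_ge hc)
            · exact le_refl _

lemma stepM_congr {l l' : List ℝ} {n : ℕ} {P : Finset ℕ}
    (hn : sz l' n = sz l n) (hP : ∀ i ∈ P, sz l' i = sz l i) :
    stepM l' n P = stepM l n P := by
  unfold stepM
  have h : (∃ j ∈ P, sz l' n ≤ sz l' j) ↔ (∃ j ∈ P, sz l n ≤ sz l j) := by
    constructor
    · rintro ⟨j, hj, hle⟩; exact ⟨j, hj, by rwa [hn, hP j hj] at hle⟩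
    · rintro ⟨j, hj, hle⟩; exact ⟨j, hj, by rw [hn, hP j hj]; exact hle⟩
  rw [if_congr h rfl rfl]

lemma packM_subset {l : List ℝ} : ∀ n, packM l n ⊆ range n := by
  intro n
  induction n with
  | zero => simp [packM]
  | succ k ih =>
      show stepM l k (packM l k) ⊆ range (k+1)
      refine stepM_subset.trans ?_
      rw [Finset.range_add_one]
      exact Finset.insert_subset_insert _ ih

lemma packM_append (l : List ℝ) (x : ℝ) : ∀ n ≤ l.length, packM (l ++ [x]) n = packM l n := by
  intro n
  induction n with
  | zero => intro _; rfl
  | succ k ih =>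
      intro h
      have hk : k < l.length := Nat.lt_of_succ_le h
      show stepM (l ++ [x]) k (packM (l ++ [x]) k) = stepM l k (packM l k)
      rw [ih hk.le]
      exact stepM_congr (sz_append hk)
        (fun i hi => sz_append ((mem_range.1 (packM_subset k hi)).trans hk))


def Alg1 : OnlineAlg where
  pack l := packA l l.length
  pack_subset l _ := packA_subset _
  pack_capacity l hl := (invA_packA hl l.length le_rfl).1
  pack_online l x hv := by
    have hlen : (l ++ [x]).length = l.length + 1 := by simp
    have h1 : packA (l ++ [x]) (l ++ [x]).length
        = step (l ++ [x]) l.length (packA l l.length) := by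
      rw [hlen]
      show step (l ++ [x]) l.length (packA (l ++ [x]) l.length) = _
      rw [packA_append l x l.length le_rfl]
    show packA (l ++ [x]) (l ++ [x]).length ⊆ packA l l.length ∪ {l.length}
    rw [h1]
    refine step_subset.trans ?_
    rw [Finset.insert_eq, Finset.union_comm]

def Alg0 : OnlineAlg where
  pack l := packM l l.length
  pack_subset l _ := packM_subset _
  pack_capacity l hl := by
    show ∑ i ∈ packM l l.length, l.getD i 0 ≤ 1
    rcases packM_spec l l.length with ⟨hP, _⟩ | ⟨j, hj, hP, _⟩
    · rw [hP]; simp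
    · rw [hP]
      rw [Finset.sum_singleton]
      exact sz_le_one hl hj
  pack_online l x hv := by
    have hlen : (l ++ [x]).length = l.length + 1 := by simp
    have h1 : packM (l ++ [x]) (l ++ [x]).length
        = stepM (l ++ [x]) l.length (packM l l.length) := by
      rw [hlen]
      show stepM (l ++ [x]) l.length (packM (l ++ [x]) l.length) = _
      rw [packM_append l x l.length le_rfl]
    show packM (l ++ [x]) (l ++ [x]).length ⊆ packM l l.length ∪ {l.length}
    rw [h1]
    refine stepM_subset.trans ?_
    rw [Finset.insert_eq, Finset.union_comm]

lemma main_bound : ∀ l : List ℝ, ValidInstance l →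
    OPT l ≤ (3 / 2) * max (gain Alg0 l) (gain Alg1 l) := by
  intro l hl
  have hg1e : gain Alg1 l = sSum l (packA l l.length) := rfl
  have hg0e : gain Alg0 l = sSum l (packM l l.length) := rfl
  have hInv := invA_packA hl l.length le_rfl
  have hg1nn : 0 ≤ gain Alg1 l := by
    rw [hg1e]; exact sSum_nonneg hl (packA_subset _)
  have hg0nn : 0 ≤ gain Alg0 l := by
    rw [hg0e]; exact sSum_nonneg hl (packM_subset _)
  have hmax0 : gain Alg0 l ≤ max (gain Alg0 l) (gain Alg1 l) := le_max_left _ _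
  have hmax1 : gain Alg1 l ≤ max (gain Alg0 l) (gain Alg1 l) := le_max_right _ _
  apply Finset.sup'_le
  intro O hO
  have hO' := Finset.mem_filter.1 hO
  have hOsub : O ⊆ range l.length := Finset.mem_powerset.1 hO'.1
  have hOle : sSum l O ≤ 1 := hO'.2
  show sSum l O ≤ _
  rcases hInv.2 with hA | hB
  · have hA' : (2:ℝ)/3 ≤ gain Alg1 l := by rw [hg1e]; exact hA
    linarith
  · obtain ⟨hlt, hB1, hB2, hB3⟩ := hB
    set Small : Finset ℕ := (range l.length).filter (fun i => sz l i ≤ 1/3) with hSmalldef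
    set OS : Finset ℕ := O.filter (fun i => sz l i ≤ 1/3) with hOSdef
    set OM : Finset ℕ := O.filter (fun i => ¬ sz l i ≤ 1/3) with hOMdef
    have hsplit : sSum l O = sSum l OS + sSum l OM :=
      (Finset.sum_filter_add_sum_filter_not O _ _).symm
    have hSmallR : Small ⊆ range l.length := Finset.filter_subset _ _
    have hOSS : OS ⊆ Small := by
      intro i hi
      have h' := Finset.mem_filter.1 hi
      exact Finset.mem_filter.2 ⟨hOsub h'.1, h'.2⟩
    have hOSs : sSum l OS ≤ sSum l Small := subset_le_sSum hl hSmallR hOSS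
    have hSmallP : Small ⊆ packA l l.length := by
      intro i hi
      have h' := Finset.mem_filter.1 hi
      exact hB2 i (mem_range.1 h'.1) h'.2
    have hsSmall : sSum l Small ≤ gain Alg1 l := by
      rw [hg1e]; exact subset_le_sSum hl (packA_subset _) hSmallP
    have hsnn : 0 ≤ sSum l Small := sSum_nonneg hl hSmallR
    rcases Nat.lt_or_ge OM.card 2 with hc2 | hc2
    · have hc01 : OM.card = 0 ∨ OM.card = 1 := by omega
      rcases hc01 with hc0 | hc1
      · -- no medium in O
        have hOM : OM = ∅ := Finset.card_eq_zero.1 hc0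
        have : sSum l O = sSum l OS := by rw [hsplit, hOM]; simp [sSum]
        linarith
      · -- exactly one medium a in O
        obtain ⟨a, haOM⟩ := Finset.card_eq_one.1 hc1
        have haM := Finset.mem_filter.1 (haOM ▸ Finset.mem_singleton_self a)
        have haO : a ∈ O := haM.1
        have ham : 1/3 < sz l a := lt_of_not_ge haM.2
        have haR : a < l.length := mem_range.1 (hOsub haO)
        have hOMsum : sSum l OM = sz l a := by rw [haOM, sSum, Finset.sum_singleton]
        obtain ⟨j, hjP, hjm, hjmin⟩ := hB3 a haR ham
        have hg1 : sz l j + sSum l Small ≤ gain Alg1 l := by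
          have hjS : j ∉ Small := fun h =>
            absurd (Finset.mem_filter.1 h).2 (not_le.2 hjm)
          have hins : insert j Small ⊆ packA l l.length :=
            Finset.insert_subset hjP hSmallP
          calc sz l j + sSum l Small = sSum l (insert j Small) := (sSum_insert hjS).symm
            _ ≤ sSum l (packA l l.length) := subset_le_sSum hl (packA_subset _) hins
            _ = gain Alg1 l := hg1e.symm
        have hg0a : sz l a ≤ gain Alg0 l := by
          rcases packM_spec l l.length with ⟨_, h0⟩ | ⟨j0, hj0, hP0, hmax'⟩
          · exact absurd (h0 ▸ haR) (Nat.not_lt_zero a)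
          · have he : gain Alg0 l = sz l j0 := by
              rw [hg0e, hP0, sSum, Finset.sum_singleton]
            rw [he]; exact hmax' a haR
        by_cases haj : a = j
        · have h1 : sSum l O ≤ gain Alg1 l := by
            rw [hsplit, hOMsum, haj]; linarith
          linarith
        · have hmm := hjmin a haR ham
          have hpair : 1 < sz l j + sz l a := hmm.2 haj
          have ha23 : sz l a < 2/3 := hB1 a haR
          have h1 : sSum l O ≤ sSum l Small + sz l a := by
            rw [hsplit, hOMsum]; linarith
          by_cases hss : sSum l Small ≤ sz l a / 2
          · linarith
          · have h2 : sSum l Small + sz l a ≤ 3/2 * (sz l j + sSum l Small) := by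
              linarith
            linarith
    · -- two mediums in O : impossible
      exfalso
      obtain ⟨a, haOM, b, hbOM, hab⟩ := Finset.one_lt_card.1 hc2
      have haM := Finset.mem_filter.1 haOM
      have hbM := Finset.mem_filter.1 hbOM
      have ham : 1/3 < sz l a := lt_of_not_ge haM.2
      have hbm : 1/3 < sz l b := lt_of_not_ge hbM.2
      have haR : a < l.length := mem_range.1 (hOsub haM.1)
      have hbR : b < l.length := mem_range.1 (hOsub hbM.1)
      have hpab : sz l a + sz l b ≤ 1 :=
        le_trans (pair_le_sSum hl hOsub haM.1 hbM.1 hab) hOle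
      obtain ⟨j, hjP, hjm, hjmin⟩ := hB3 a haR ham
      have hma := hjmin a haR ham
      have hmb := hjmin b hbR hbm
      by_cases haj : a = j
      · have := hmb.2 (by rw [← haj]; exact fun h => hab h.symm)
        rw [← haj] at this
        linarith
      · by_cases hbj : b = j
        · have := hma.2 haj
          rw [← hbj] at this
          linarith
        · have h1 := hma.2 haj
          have h2 := hmb.2 hbj
          linarith [hma.1, hmb.1]

end RemKnapAlg


/-- There is a strictly `3/2`-competitive online algorithm for the proportional
removable knapsack problem reading one advice bit, i.e. two deterministic
online algorithms the better of which is always within a factor `3/2` of optimal. -/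
theorem remKnap_one_advice_bit_three_halves_competitive :
    ∃ A₀ A₁ : OnlineAlg, ∀ l : List ℝ, ValidInstance l →
      OPT l ≤ (3 / 2) * max (gain A₀ l) (gain A₁ l) := by
  exact ⟨Alg0, Alg1, main_bound⟩
end

section
/- Let m be a positive integer divisible by 3 with m ≥ 12, and let k be a natural number with k ≤ m/3. Then ∑_{i=k}^{m−k} C(m, i) > 2^m · (1 − 2^{−m/13 + log₂ m}), i.e., the sum of the middle binomial coefficients C(m, k), …, C(m, m−k) is strictly greater than 2^m − m · 2^{12m/13}. -/
open Nat in
lemma choose_mono_half (n : ℕ) : ∀ i j, i ≤ j → j ≤ n / 2 → n.choose i ≤ n.choose j := by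
  intro i j hij
  induction j, hij using Nat.le_induction with
  | base => intro _; exact le_rfl
  | succ j hj ih =>
    intro h
    exact (ih (by omega)).trans (Nat.choose_le_succ_of_lt_half_left (by omega))

open Nat in
lemma choose_step (n : ℕ) :
    (n+1)*(2*n+1)*(2*n+2)*((3*n+3).choose (n+1))
      = (3*n+1)*(3*n+2)*(3*n+3)*((3*n).choose n) := by
  have h1 := Nat.choose_mul_factorial_mul_factorial (show n+1 ≤ 3*n+3 by omega)
  have h2 := Nat.choose_mul_factorial_mul_factorial (show n ≤ 3*n by omega)
  have e0 : 3*n+3 - (n+1) = 2*n+2 := by omega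
  have e0' : 3*n - n = 2*n := by omega
  rw [e0] at h1; rw [e0'] at h2
  have e1 : (3*n+3)! = (3*n+3)*((3*n+2)*((3*n+1)*(3*n)!)) := by
    rw [show 3*n+3 = (3*n+2)+1 by ring, Nat.factorial_succ,
        show 3*n+2 = (3*n+1)+1 by ring, Nat.factorial_succ,
        show 3*n+1 = (3*n)+1 by ring, Nat.factorial_succ]
  have e2 : (n+1)! = (n+1) * n ! := Nat.factorial_succ n
  have e3 : (2*n+2)! = (2*n+2)*((2*n+1)*(2*n)!) := by
    rw [show 2*n+2 = (2*n+1)+1 by ring, Nat.factorial_succ,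
        show 2*n+1 = (2*n)+1 by ring, Nat.factorial_succ]
  apply Nat.eq_of_mul_eq_mul_right (Nat.mul_pos (Nat.factorial_pos n) (Nat.factorial_pos (2*n)))
  calc (n+1)*(2*n+1)*(2*n+2)*((3*n+3).choose (n+1)) * (n ! * (2*n)!)
      = (3*n+3).choose (n+1) * (n+1)! * (2*n+2)! := by rw [e2, e3]; ring
    _ = (3*n+3)! := h1
    _ = (3*n+1)*(3*n+2)*(3*n+3)*((3*n)!) := by rw [e1]; ring
    _ = (3*n+1)*(3*n+2)*(3*n+3)*((3*n).choose n * n ! * (2*n)!) := by rw [h2]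
    _ = (3*n+1)*(3*n+2)*(3*n+3)*((3*n).choose n) * (n ! * (2*n)!) := by ring

lemma choose_pow13 : ∀ n : ℕ, ((3*n).choose n)^13 ≤ 2^(36*n) := by
  intro n
  induction n with
  | zero => simp
  | succ n ih =>
    have hb : 3*(n+1) = 3*n+3 := by ring
    rw [hb]
    generalize hA : (3*n+1)*(3*n+2)*(3*n+3) = A at *
    generalize hB : (n+1)*(2*n+1)*(2*n+2) = B at *
    generalize hav : (3*n).choose n = a at *
    generalize hbv : (3*n+3).choose (n+1) = b at *
    have key : B * b = A * a := by rw [← hA, ← hB, ← hav, ← hbv]; exact choose_step n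
    have hAB : 4*A ≤ 27*B := by rw [← hA, ← hB]; nlinarith [sq_nonneg n]
    have h13 : (4*A)^13 ≤ (27*B)^13 := Nat.pow_le_pow_left hAB 13
    have hA13 : 2^26 * A^13 ≤ 2^62 * B^13 := by
      calc 2^26 * A^13 = (4*A)^13 := by rw [mul_pow]; congr 1
        _ ≤ (27*B)^13 := h13
        _ = 27^13 * B^13 := by rw [mul_pow]
        _ ≤ 2^62 * B^13 := by
            apply Nat.mul_le_mul_right
            norm_num
    have hA36 : A^13 ≤ 2^36 * B^13 := by
      have h : 2^26 * A^13 ≤ 2^26 * (2^36 * B^13) := by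
        calc 2^26 * A^13 ≤ 2^62 * B^13 := hA13
          _ = 2^26 * (2^36 * B^13) := by ring
      exact Nat.le_of_mul_le_mul_left h (by positivity)
    have hB0 : 0 < B := by rw [← hB]; positivity
    have hBpos : 0 < B^13 := by positivity
    have hfin : b^13 ≤ 2^36 * a^13 := by
      refine Nat.le_of_mul_le_mul_right ?_ hBpos
      calc b^13 * B^13 = (B*b)^13 := by rw [mul_pow]; ring
        _ = (A*a)^13 := by rw [key]
        _ = A^13 * a^13 := by rw [mul_pow]
        _ ≤ (2^36 * B^13) * a^13 := Nat.mul_le_mul_right _ hA36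
        _ = (2^36 * a^13) * B^13 := by ring
    calc b^13 ≤ 2^36 * a^13 := hfin
      _ ≤ 2^36 * 2^(36*n) := Nat.mul_le_mul_left _ ih
      _ = 2^(36*(n+1)) := by rw [← pow_add]; ring_nf

/-- Lower bound on the middle binomial coefficients: for `m ≥ 12` divisible by `3`
and `k ≤ m/3`, `∑_{i=k}^{m−k} C(m, i) > 2^m · (1 − 2^(−m/13 + log₂ m))`. -/
theorem binomial_middle_bound (m k : ℕ) (hm : 12 ≤ m) (h3 : 3 ∣ m) (hk : k ≤ m / 3) :
    (2 : ℝ) ^ m * (1 - (2 : ℝ) ^ (-(m : ℝ) / 13 + Real.logb 2 m)) <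
      ∑ i ∈ Finset.Icc k (m - k), (m.choose i : ℝ) := by
  obtain ⟨n, rfl⟩ := h3
  have hn : 4 ≤ n := by omega
  have hk' : k ≤ n := by omega
  set c : ℝ := ((3*n).choose n : ℝ) with hc
  have hcpos : (0:ℝ) < c := by
    rw [hc]; exact_mod_cast Nat.choose_pos (show n ≤ 3*n by omega)
  set R : ℝ := (2:ℝ) ^ ((36*(n:ℝ))/13) with hR
  have hRpos : (0:ℝ) < R := Real.rpow_pos_of_pos (by norm_num) _
  -- bound c ≤ R
  have hcb : c ≤ R := by
    have h1 : c ^ (13:ℕ) ≤ R ^ (13:ℕ) := by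
      rw [hR, ← Real.rpow_natCast ((2:ℝ) ^ ((36*(n:ℝ))/13)) 13,
          ← Real.rpow_mul (by norm_num : (0:ℝ) ≤ 2)]
      rw [show (36*(n:ℝ))/13 * ((13:ℕ):ℝ) = ((36*n : ℕ):ℝ) by push_cast; ring]
      rw [Real.rpow_natCast, hc]
      exact_mod_cast choose_pow13 n
    exact le_of_pow_le_pow_left₀ (by norm_num) hRpos.le h1
  have hM : (0:ℝ) < ((3*n : ℕ):ℝ) := by exact_mod_cast (by omega : 0 < 3*n)
  -- rewrite the left-hand side
  rw [Real.rpow_add two_pos, Real.rpow_logb two_pos (by norm_num) hM, mul_sub, mul_one]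
  have hpow : (2:ℝ)^(3*n) * ((2:ℝ)^(-(((3*n:ℕ)):ℝ)/13) * ((3*n:ℕ):ℝ))
      = ((3*n:ℕ):ℝ) * R := by
    have hx : (2:ℝ)^(((3*n:ℕ)):ℝ) * (2:ℝ)^(-(((3*n:ℕ)):ℝ)/13) = R := by
      rw [hR, ← Real.rpow_add two_pos]; congr 1; push_cast; ring
    calc (2:ℝ)^(3*n) * ((2:ℝ)^(-(((3*n:ℕ)):ℝ)/13) * ((3*n:ℕ):ℝ))
        = ((2:ℝ)^(((3*n:ℕ)):ℝ) * (2:ℝ)^(-(((3*n:ℕ)):ℝ)/13)) * ((3*n:ℕ):ℝ) := by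
          rw [Real.rpow_natCast]; ring
      _ = R * ((3*n:ℕ):ℝ) := by rw [hx]
      _ = ((3*n:ℕ):ℝ) * R := mul_comm _ _
  rw [hpow]
  -- decompose the sum
  set f : ℕ → ℝ := fun i => ((3*n).choose i : ℝ) with hf
  have hall : ∑ i ∈ Finset.range (3*n+1), f i = 2^(3*n) := by
    have := Nat.sum_range_choose (3*n)
    simp only [hf]
    exact_mod_cast this
  have h1 : ∑ i ∈ Finset.Icc k (3*n - k), f i
      = ∑ i ∈ Finset.range (3*n - k + 1), f i - ∑ i ∈ Finset.range k, f i := by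
    rw [← Finset.Ico_add_one_right_eq_Icc, Finset.sum_Ico_eq_sub _ (by omega)]
  have h2 : ∑ i ∈ Finset.Ico (3*n-k+1) (3*n+1), f i
      = ∑ i ∈ Finset.range (3*n+1), f i - ∑ i ∈ Finset.range (3*n-k+1), f i :=
    Finset.sum_Ico_eq_sub _ (by omega)
  -- tail bounds
  have hLb : ∑ i ∈ Finset.range k, f i ≤ (k:ℝ) * c := by
    calc ∑ i ∈ Finset.range k, f i ≤ ∑ _i ∈ Finset.range k, c :=
          Finset.sum_le_sum (fun i hi => by
            have hik : i < k := Finset.mem_range.mp hi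
            have := choose_mono_half (3*n) i n (by omega) (by omega)
            show ((3*n).choose i : ℝ) ≤ c
            rw [hc]
            exact_mod_cast this)
      _ = (k:ℝ) * c := by rw [Finset.sum_const, Finset.card_range, nsmul_eq_mul]
  have hUb : ∑ i ∈ Finset.Ico (3*n-k+1) (3*n+1), f i ≤ (k:ℝ) * c := by
    calc ∑ i ∈ Finset.Ico (3*n-k+1) (3*n+1), f i
        ≤ ∑ _i ∈ Finset.Ico (3*n-k+1) (3*n+1), c :=
          Finset.sum_le_sum (fun i hi => by
            rw [Finset.mem_Ico] at hi
            have hi' : i ≤ 3*n := by omega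
            have hsym : (3*n).choose i = (3*n).choose (3*n - i) :=
              (Nat.choose_symm hi').symm
            have hmon : (3*n).choose (3*n - i) ≤ (3*n).choose n :=
              choose_mono_half (3*n) (3*n - i) n (by omega) (by omega)
            show ((3*n).choose i : ℝ) ≤ c
            rw [hsym, hc]
            exact_mod_cast hmon)
      _ = (k:ℝ) * c := by
          rw [Finset.sum_const, Nat.card_Ico, nsmul_eq_mul]
          congr 1
          push_cast [show 3*n+1 - (3*n-k+1) = k by omega]
          rfl
  -- combine
  have e1 : (k:ℝ) * c ≤ (n:ℝ) * c :=
    mul_le_mul_of_nonneg_right (by exact_mod_cast hk') hcpos.le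
  have e4 : 3*(n:ℝ) * c ≤ 3*(n:ℝ) * R :=
    mul_le_mul_of_nonneg_left hcb (by positivity)
  have e5 : (0:ℝ) < (n:ℝ) * c := by
    have : (0:ℝ) < (n:ℝ) := by exact_mod_cast (by omega : 0 < n)
    positivity
  have hMcast : ((3*n:ℕ):ℝ) = 3*(n:ℝ) := by push_cast; ring
  rw [h1, h2] at *
  rw [hMcast]
  linarith [hall, hLb, hUb, e1, e4, e5]
end

section
/- Let ψ = 4/(1 + √17). Then ψ is the unique positive real root of 2x² + x − 2 = 0; in particular 2(1 − ψ²) = ψ, 0 < ψ < 1, and ψ + ψ² > 1. Moreover, for every real ε with 0 < ε < 1 − ψ, the list of item sizes (ψ, ψ², 1 − ψ² + ε, 1 − ψ²) has the following properties: any two of the first three sizes sum to more than 1; the maximum over all subsets of the four items whose total size is at most 1 of the total size equals 1, and it is attained only by the subset {ψ², 1 − ψ²}; and every subset of total size at most 1 that does not equal {ψ², 1 − ψ²} has total size at most ψ + ε. -/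
set_option maxHeartbeats 1000000 in
/-- Properties of `ψ = 4/(1 + √17)` and of the hard instance `(ψ, ψ², 1 − ψ² + ε, 1 − ψ²)`
used in the one-advice-bit lower bound: `ψ` is the unique positive root of `2x² + x − 2`,
`2(1 − ψ²) = ψ`, `0 < ψ < 1`, `ψ + ψ² > 1`; any two of the first three item sizes sum to
more than `1`; the unique feasible packing of total size `1` is `{ψ², 1 − ψ²}`; and every
other feasible packing has total size at most `ψ + ε`. -/
theorem one_bit_hard_instance_properties :
    let ψ : ℝ := 4 / (1 + Real.sqrt 17)
    (2 * ψ ^ 2 + ψ - 2 = 0 ∧ ∀ y : ℝ, 0 < y → 2 * y ^ 2 + y - 2 = 0 → y = ψ) ∧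
    2 * (1 - ψ ^ 2) = ψ ∧ 0 < ψ ∧ ψ < 1 ∧ 1 < ψ + ψ ^ 2 ∧
    ∀ ε : ℝ, 0 < ε → ε < 1 - ψ →
      let x : Fin 4 → ℝ := ![ψ, ψ ^ 2, 1 - ψ ^ 2 + ε, 1 - ψ ^ 2]
      (∀ i j : Fin 4, i ≠ j → i ≠ 3 → j ≠ 3 → 1 < x i + x j) ∧
      (∑ i ∈ ({1, 3} : Finset (Fin 4)), x i = 1) ∧
      (∀ S : Finset (Fin 4), (∑ i ∈ S, x i) ≤ 1 → S ≠ {1, 3} →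
        (∑ i ∈ S, x i) ≤ ψ + ε) := by
  intro ψ
  have h17 : Real.sqrt 17 ^ 2 = 17 := Real.sq_sqrt (by norm_num)
  have hs0 : (0:ℝ) ≤ Real.sqrt 17 := Real.sqrt_nonneg 17
  have h4 : (4:ℝ) < Real.sqrt 17 := by nlinarith
  have h5 : Real.sqrt 17 < 5 := by nlinarith
  have hden : (0:ℝ) < 1 + Real.sqrt 17 := by linarith
  have hψ : ψ = 4 / (1 + Real.sqrt 17) := rfl
  have key : 2 * ψ ^ 2 + ψ - 2 = 0 := by
    rw [hψ]; field_simp; nlinarith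
  have ψpos : 0 < ψ := by rw [hψ]; positivity
  have ψlt1 : ψ < 1 := by
    rw [hψ]; rw [div_lt_one hden]; linarith
  have ψgt : (2:ℝ)/3 < ψ := by
    rw [hψ, div_lt_div_iff₀ (by norm_num) hden]; linarith
  have hsq : ψ ^ 2 = 1 - ψ / 2 := by linarith
  refine ⟨⟨key, ?_⟩, by linarith, ψpos, ψlt1, by nlinarith, ?_⟩
  · intro y hy hroot
    have hprod : (y - ψ) * (2 * (y + ψ) + 1) = 0 := by nlinarith
    rcases mul_eq_zero.1 hprod with h | h
    · linarith
    · nlinarith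
  · intro ε hε1 hε2 x
    have hx0 : x 0 = ψ := rfl
    have hx1 : x 1 = ψ ^ 2 := rfl
    have hx2 : x 2 = 1 - ψ ^ 2 + ε := rfl
    have hx3 : x 3 = 1 - ψ ^ 2 := rfl
    refine ⟨?_, ?_, ?_⟩
    · intro i j hij hi hj
      fin_cases i <;> fin_cases j <;>
        simp_all [hx0, hx1, hx2, hx3] <;> nlinarith
    · rw [Finset.sum_pair (by decide), hx1, hx3]; ring
    · intro S hsum hne
      have hrep : ∑ i ∈ S, x i = ∑ i : Fin 4, if i ∈ S then x i else 0 := by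
        rw [Finset.sum_ite_mem, Finset.univ_inter]
      rw [Fin.sum_univ_four] at hrep
      by_cases h0 : (0:Fin 4) ∈ S <;> by_cases h1 : (1:Fin 4) ∈ S <;>
        by_cases h2 : (2:Fin 4) ∈ S <;> by_cases h3 : (3:Fin 4) ∈ S <;>
        simp only [h0, h1, h2, h3, if_true, if_false, hx0, hx1, hx2, hx3] at hrep <;>
        first
        | (rw [hrep] at hsum ⊢; linarith)
        | (refine absurd ?_ hne; ext i; (fin_cases i <;> simp [h0, h1, h2, h3]); done)
end

section
/- Let k ≥ 2 be an integer and set ζ = (3 − 2k + √(4k(k+1) − 7))/4. Then ζ is the unique positive real root of 2x² + (2k − 3)x − 2(k − 1) = 0, and 1/2 < ζ < 1. Moreover, for every real ε with 0 < ε < 1 − ζ, the k + 1 real numbers x₁ = ζ, x_i = ζ² − (i − 2)(1 − ζ) for i = 2, …, k, and x_{k+1} = ζ² − (k − 1)(1 − ζ) + ε are strictly decreasing, all lie in (0, 1), and satisfy x_k + x_{k+1} = 1 + ε; consequently the sum of any two of x₁, …, x_{k+1} exceeds 1. -/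
set_option maxHeartbeats 1000000 in
/-- Properties of `ζ = (3 − 2k + √(4k(k+1) − 7))/4` and of the common prefix items of the
hard instance family for `log₂ k` advice bits: `ζ` is the unique positive root of
`2x² + (2k − 3)x − 2(k − 1)`, `1/2 < ζ < 1`, and for `0 < ε < 1 − ζ` the sizes
`x₁ = ζ`, `x_i = ζ² − (i − 2)(1 − ζ)` for `2 ≤ i ≤ k`, `x_{k+1} = ζ² − (k − 1)(1 − ζ) + ε`
are strictly decreasing, lie in `(0, 1)`, satisfy `x_k + x_{k+1} = 1 + ε`, and any two of
them sum to more than `1`. -/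
theorem log_k_hard_instance_properties (k : ℕ) (hk : 2 ≤ k) :
    let ζ : ℝ := (3 - 2 * (k : ℝ) + Real.sqrt (4 * (k : ℝ) * ((k : ℝ) + 1) - 7)) / 4
    (2 * ζ ^ 2 + (2 * (k : ℝ) - 3) * ζ - 2 * ((k : ℝ) - 1) = 0 ∧
      ∀ y : ℝ, 0 < y → 2 * y ^ 2 + (2 * (k : ℝ) - 3) * y - 2 * ((k : ℝ) - 1) = 0 → y = ζ) ∧
    1 / 2 < ζ ∧ ζ < 1 ∧
    ∀ ε : ℝ, 0 < ε → ε < 1 - ζ →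
      ∀ x : ℕ → ℝ, x 1 = ζ →
        (∀ i : ℕ, 2 ≤ i → i ≤ k → x i = ζ ^ 2 - ((i : ℝ) - 2) * (1 - ζ)) →
        x (k + 1) = ζ ^ 2 - ((k : ℝ) - 1) * (1 - ζ) + ε →
        (StrictAntiOn x (Set.Icc 1 (k + 1)) ∧
          (∀ i ∈ Set.Icc 1 (k + 1), 0 < x i ∧ x i < 1) ∧
          x k + x (k + 1) = 1 + ε ∧
          ∀ i j : ℕ, 1 ≤ i → i < j → j ≤ k + 1 → 1 < x i + x j) := by
  intro ζ
  have hk2 : (2:ℝ) ≤ (k:ℝ) := by exact_mod_cast hk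
  set s := Real.sqrt (4 * (k:ℝ) * ((k:ℝ) + 1) - 7) with hs
  have hs0 : 0 ≤ s := Real.sqrt_nonneg _
  have hs2 : s ^ 2 = 4 * (k:ℝ) * ((k:ℝ) + 1) - 7 := Real.sq_sqrt (by nlinarith)
  have hζ : ζ = (3 - 2 * (k:ℝ) + s) / 4 := rfl
  clear_value ζ
  have hroot : 2 * ζ ^ 2 + (2 * (k:ℝ) - 3) * ζ - 2 * ((k:ℝ) - 1) = 0 := by
    rw [hζ]; linear_combination hs2 / 8
  have hspos : 2 * (k:ℝ) - 3 < s := by nlinarith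
  have hζpos : 0 < ζ := by rw [hζ]; linarith
  have hζ23 : 2 / 3 < ζ := by nlinarith [hroot, hζpos, hk2]
  have hζ1 : ζ < 1 := by nlinarith [hroot, hζpos, hk2]
  refine ⟨⟨hroot, ?_⟩, by linarith, hζ1, ?_⟩
  · intro y hy hyroot
    have hfac : (y - ζ) * (2 * (y + ζ) + 2 * (k:ℝ) - 3) = 0 := by
      linear_combination hyroot - hroot
    rcases mul_eq_zero.mp hfac with h | h
    · linarith
    · nlinarith
  intro ε hε hε' x h1 hmid hlast
  have hζsq : ζ ^ 2 = ζ / 2 + ((k:ℝ) - 1) * (1 - ζ) := by linear_combination hroot / 2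
  have hval : ∀ i : ℕ, 2 ≤ i → i ≤ k → x i = ζ / 2 + ((k:ℝ) + 1 - (i:ℝ)) * (1 - ζ) := by
    intro i h2 hik
    rw [hmid i h2 hik, hζsq]; ring
  have hlast' : x (k + 1) = ζ / 2 + ε := by
    rw [hlast, hζsq]; ring
  have hlow : ∀ i : ℕ, 1 ≤ i → i ≤ k → 1 - ζ / 2 ≤ x i := by
    intro i h1i hik
    rcases eq_or_lt_of_le h1i with h | h
    · rw [← h, h1]; linarith
    · have h2 : 2 ≤ i := h
      have hikR : (i:ℝ) ≤ (k:ℝ) := by exact_mod_cast hik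
      rw [hval i h2 hik]
      have e1 : 1 * (1 - ζ) ≤ ((k:ℝ) + 1 - (i:ℝ)) * (1 - ζ) :=
        mul_le_mul_of_nonneg_right (by linarith) (by linarith)
      linarith
  have hanti : StrictAntiOn x (Set.Icc 1 (k + 1)) := by
    intro a ha b hb hab
    simp only [Set.mem_Icc] at ha hb
    have habR : (a:ℝ) < (b:ℝ) := by exact_mod_cast hab
    rcases eq_or_lt_of_le hb.2 with hbk | hbk
    · rw [hbk, hlast']
      rcases eq_or_lt_of_le ha.1 with h | h
      · rw [← h, h1]; linarith
      · have h2 : 2 ≤ a := h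
        have hak : a ≤ k := by omega
        have haR : (a:ℝ) ≤ (k:ℝ) := by exact_mod_cast hak
        rw [hval a h2 hak]
        have e1 : 1 * (1 - ζ) ≤ ((k:ℝ) + 1 - (a:ℝ)) * (1 - ζ) :=
          mul_le_mul_of_nonneg_right (by linarith) (by linarith)
        linarith
    · have hbk' : b ≤ k := by omega
      have hbR : (b:ℝ) ≤ (k:ℝ) := by exact_mod_cast hbk'
      have h2b : 2 ≤ b := by omega
      have h2bR : (2:ℝ) ≤ (b:ℝ) := by exact_mod_cast h2b
      rw [hval b h2b hbk']
      rcases eq_or_lt_of_le ha.1 with h | h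
      · rw [← h, h1]
        have e1 : ((k:ℝ) + 1 - (b:ℝ)) * (1 - ζ) ≤ ((k:ℝ) - 1) * (1 - ζ) :=
          mul_le_mul_of_nonneg_right (by linarith) (by linarith)
        have e2 : ζ ^ 2 < ζ := by
          nlinarith [mul_pos hζpos (show (0:ℝ) < 1 - ζ by linarith)]
        linarith
      · have h2a : 2 ≤ a := h
        have hak : a ≤ k := by omega
        rw [hval a h2a hak]
        have e1 : ((k:ℝ) + 1 - (b:ℝ)) * (1 - ζ) < ((k:ℝ) + 1 - (a:ℝ)) * (1 - ζ) :=
          mul_lt_mul_of_pos_right (by linarith) (by linarith)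
        linarith
  refine ⟨hanti, ?_, ?_, ?_⟩
  · intro i hi
    simp only [Set.mem_Icc] at hi
    rcases eq_or_lt_of_le hi.2 with hik | hik
    · rw [hik, hlast']
      constructor <;> linarith
    · have hik' : i ≤ k := by omega
      rcases eq_or_lt_of_le hi.1 with h | h
      · rw [← h, h1]; exact ⟨hζpos, hζ1⟩
      · have h2 : 2 ≤ i := h
        have hiR : (i:ℝ) ≤ (k:ℝ) := by exact_mod_cast hik'
        have h2iR : (2:ℝ) ≤ (i:ℝ) := by exact_mod_cast h2
        rw [hval i h2 hik']
        have e0 : 0 ≤ ((k:ℝ) + 1 - (i:ℝ)) * (1 - ζ) :=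
          mul_nonneg (by linarith) (by linarith)
        have e1 : ((k:ℝ) + 1 - (i:ℝ)) * (1 - ζ) ≤ ((k:ℝ) - 1) * (1 - ζ) :=
          mul_le_mul_of_nonneg_right (by linarith) (by linarith)
        have e2 : ζ ^ 2 < ζ := by
          nlinarith [mul_pos hζpos (show (0:ℝ) < 1 - ζ by linarith)]
        exact ⟨by linarith, by linarith⟩
  · rw [hval k hk le_rfl, hlast']
    ring
  · intro i j h1i hij hjk1
    have hik : i ≤ k := by omega
    have hxi : 1 - ζ / 2 ≤ x i := hlow i h1i hik
    rcases eq_or_lt_of_le hjk1 with hj | hj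
    · rw [hj, hlast']; linarith
    · have hjk : j ≤ k := by omega
      have hxj : 1 - ζ / 2 ≤ x j := hlow j (by omega) hjk
      linarith
end
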